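/- arXiv:1609.09205 — 8 statements merged into one kernel-verified Lean document; each statement's English description precedes it below -/
import Mathlib

section
/- Let Y : Ω → ℝ^d be a random variable on a measurable space (Ω, 𝒢), 𝒬 a nonempty set of probability measures on Ω, and D ⊆ ℝ^d a vector subspace. Suppose there is α ∈ (0,1] such that for every h ∈ D there exists P_h ∈ 𝒬 with P_h(hY ≤ -α|h|) ≥ α. Then for every x ≥ 0, the set D_x := {h ∈ D : x + hY ≥ 0 𝒬-quasi-surely} is contained in the closed ball B(0, x/α), and D_x is a convex compact subset of ℝ^d. -/
open Set MeasureTheory Metric Filter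

/-!
If `h ∈ D_x`, the event `{h⬝Y ≤ -α|h|}` has positive `P_h`-probability, so it meets the
`P_h`-full event `{x + h⬝Y ≥ 0}`; at a common point `α|h| ≤ -h⬝Y ≤ x`. Moreover `D_x` is the
intersection of the subspace `D` with sets of the form `{h | ∀ᵐ ω, h ∈ C ω}` for closed
half-spaces `C ω`, and such sets are convex and (by taking a countable intersection of full
events along a convergent sequence) closed. A closed subset of a closed ball is compact.
-/

section AeMem

variable {Ω E : Type*} [MeasurableSpace Ω]

theorem convex_setOf_forall_ae_mem [AddCommMonoid E] [Module ℝ E]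
    (𝒬 : Set (Measure Ω)) {C : Ω → Set E} (hC : ∀ ω, Convex ℝ (C ω)) :
    Convex ℝ {e | ∀ P ∈ 𝒬, ∀ᵐ ω ∂P, e ∈ C ω} := by
  intro e₁ he₁ e₂ he₂ a b ha hb hab P hP
  filter_upwards [he₁ P hP, he₂ P hP] with ω h₁ h₂
  exact hC ω h₁ h₂ ha hb hab

theorem isClosed_setOf_forall_ae_mem [TopologicalSpace E] [FrechetUrysohnSpace E]
    (𝒬 : Set (Measure Ω)) {C : Ω → Set E} (hC : ∀ ω, IsClosed (C ω)) :
    IsClosed {e | ∀ P ∈ 𝒬, ∀ᵐ ω ∂P, e ∈ C ω} := by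
  refine IsSeqClosed.isClosed fun u e hu hlim P hP => ?_
  have hall : ∀ᵐ ω ∂P, ∀ n, u n ∈ C ω := ae_all_iff.2 fun n => hu n P hP
  filter_upwards [hall] with ω hω
  exact (hC ω).mem_of_tendsto hlim (Eventually.of_forall hω)

end AeMem

section HalfSpace

variable {E : Type*} [NormedAddCommGroup E] [InnerProductSpace ℝ E]

theorem convex_setOf_nonneg_add_inner (x : ℝ) (y : E) :
    Convex ℝ {h : E | 0 ≤ x + inner ℝ h y} := by
  intro h₁ hh₁ h₂ hh₂ a b ha hb hab
  simp only [mem_ofPred_eq, inner_add_left, real_inner_smul_left] at hh₁ hh₂ ⊢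
  calc 0 ≤ a * (x + inner ℝ h₁ y) + b * (x + inner ℝ h₂ y) :=
        add_nonneg (mul_nonneg ha hh₁) (mul_nonneg hb hh₂)
    _ = x + (a * inner ℝ h₁ y + b * inner ℝ h₂ y) := by linear_combination x * hab

theorem isClosed_setOf_nonneg_add_inner (x : ℝ) (y : E) :
    IsClosed {h : E | 0 ≤ x + inner ℝ h y} :=
  isClosed_le continuous_const (continuous_const.add (continuous_id.inner continuous_const))

theorem norm_le_div_of_ae_nonneg_add_inner {Ω : Type*} [MeasurableSpace Ω] {P : Measure Ω}
    {Y : Ω → E} {h : E} {x α : ℝ} (hα : 0 < α)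
    (hP : ENNReal.ofReal α ≤ P {ω | inner ℝ h (Y ω) ≤ -α * ‖h‖})
    (hx : ∀ᵐ ω ∂P, 0 ≤ x + inner ℝ h (Y ω)) :
    ‖h‖ ≤ x / α := by
  have hfreq : ∃ᵐ ω ∂P, inner ℝ h (Y ω) ≤ -α * ‖h‖ :=
    frequently_ae_iff.2 (ne_bot_of_le_ne_bot (by simpa using hα) hP)
  obtain ⟨ω, hω, hxω⟩ := (hfreq.and_eventually hx).exists
  rw [le_div_iff₀ hα]
  linarith

end HalfSpace

theorem Dx_subset_ball_convex_compact_general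
    {d : ℕ} {Ω : Type*} [MeasurableSpace Ω]
    (Y : Ω → EuclideanSpace ℝ (Fin d)) (hY : Measurable Y)
    (𝒬 : Set (Measure Ω))
    (h𝒬prob : ∀ P ∈ 𝒬, IsProbabilityMeasure P)
    (D : Submodule ℝ (EuclideanSpace ℝ (Fin d)))
    (α : ℝ) (hα0 : 0 < α)
    (hNA : ∀ h ∈ D, ∃ P ∈ 𝒬,
      ENNReal.ofReal α ≤ P {ω | (inner ℝ h (Y ω) : ℝ) ≤ -α * ‖h‖}) :
    ∀ x : ℝ, 0 ≤ x →
      ({h : EuclideanSpace ℝ (Fin d) | h ∈ D ∧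
          ∀ P ∈ 𝒬, P {ω | 0 ≤ x + (inner ℝ h (Y ω) : ℝ)} = 1} ⊆ closedBall 0 (x / α)) ∧
      Convex ℝ {h : EuclideanSpace ℝ (Fin d) | h ∈ D ∧
          ∀ P ∈ 𝒬, P {ω | 0 ≤ x + (inner ℝ h (Y ω) : ℝ)} = 1} ∧
      IsCompact {h : EuclideanSpace ℝ (Fin d) | h ∈ D ∧
          ∀ P ∈ 𝒬, P {ω | 0 ≤ x + (inner ℝ h (Y ω) : ℝ)} = 1} := by
  intro x _
  set C : Ω → Set (EuclideanSpace ℝ (Fin d)) := fun ω => {h | 0 ≤ x + inner ℝ h (Y ω)}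
  have hDx : {h : EuclideanSpace ℝ (Fin d) | h ∈ D ∧
      ∀ P ∈ 𝒬, P {ω | 0 ≤ x + (inner ℝ h (Y ω) : ℝ)} = 1} =
      (D : Set _) ∩ {h | ∀ P ∈ 𝒬, ∀ᵐ ω ∂P, h ∈ C ω} := by
    ext h
    refine and_congr_right fun _ => forall₂_congr fun P hP => ?_
    have := h𝒬prob P hP
    have hmeas : MeasurableSet {ω | 0 ≤ x + inner ℝ h (Y ω)} :=
      measurableSet_le measurable_const (measurable_const.add (measurable_const.inner hY))
    exact ((ae_iff_measure_eq hmeas.nullMeasurableSet).trans (by rw [measure_univ])).symm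
  have hball : (D : Set _) ∩ {h | ∀ P ∈ 𝒬, ∀ᵐ ω ∂P, h ∈ C ω} ⊆ closedBall 0 (x / α) := by
    rintro h ⟨hD, hqs⟩
    obtain ⟨P, hP, hPα⟩ := hNA h hD
    simpa using norm_le_div_of_ae_nonneg_add_inner hα0 hPα (hqs P hP)
  rw [hDx]
  refine ⟨hball, D.convex.inter ?_, ?_⟩
  · exact convex_setOf_forall_ae_mem 𝒬 fun ω => convex_setOf_nonneg_add_inner x (Y ω)
  · refine (isCompact_closedBall 0 (x / α)).of_isClosed_subset ?_ hball
    exact D.closed_of_finiteDimensional.inter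
      (isClosed_setOf_forall_ae_mem 𝒬 fun ω => isClosed_setOf_nonneg_add_inner x (Y ω))

/-- Under the quantitative no-arbitrage bound with constant `α ∈ (0,1]`,
for every `x ≥ 0` the set `D_x = {h ∈ D : x + h⬝Y ≥ 0 𝒬-q.s.}` is contained in the
closed ball of radius `x/α` and is convex and compact. -/
theorem Dx_subset_ball_convex_compact
    {d : ℕ} {Ω : Type*} [MeasurableSpace Ω]
    (Y : Ω → EuclideanSpace ℝ (Fin d)) (hY : Measurable Y)
    (𝒬 : Set (Measure Ω)) (h𝒬ne : 𝒬.Nonempty)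
    (h𝒬prob : ∀ P ∈ 𝒬, IsProbabilityMeasure P)
    (D : Submodule ℝ (EuclideanSpace ℝ (Fin d)))
    (α : ℝ) (hα0 : 0 < α) (hα1 : α ≤ 1)
    (hNA : ∀ h ∈ D, ∃ P ∈ 𝒬,
      ENNReal.ofReal α ≤ P {ω | (inner ℝ h (Y ω) : ℝ) ≤ -α * ‖h‖}) :
    ∀ x : ℝ, 0 ≤ x →
      ({h : EuclideanSpace ℝ (Fin d) | h ∈ D ∧
          ∀ P ∈ 𝒬, P {ω | 0 ≤ x + (inner ℝ h (Y ω) : ℝ)} = 1} ⊆ closedBall 0 (x / α)) ∧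
      Convex ℝ {h : EuclideanSpace ℝ (Fin d) | h ∈ D ∧
          ∀ P ∈ 𝒬, P {ω | 0 ≤ x + (inner ℝ h (Y ω) : ℝ)} = 1} ∧
      IsCompact {h : EuclideanSpace ℝ (Fin d) | h ∈ D ∧
          ∀ P ∈ 𝒬, P {ω | 0 ≤ x + (inner ℝ h (Y ω) : ℝ)} = 1} :=
  Dx_subset_ball_convex_compact_general Y hY 𝒬 h𝒬prob D α hα0 hNA
end

section
/- With the notation of the previous statement, define ℋ_x^r := {h ∈ ℝ^d : x + hY ≥ r 𝒬-q.s.} for r > 0. Then Ri(ℋ_x) ⊆ ⋃_{r ∈ ℚ, r>0} ℋ_x^r ⊆ ℋ_x, and consequently the closure of ⋃_{r ∈ ℚ, r>0} ℋ_x^r in ℝ^d equals ℋ_x. -/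
open Set MeasureTheory Filter Topology

/-! A point `h` of the relative interior of the convex set `ℋ_x ∋ 0` can be pushed slightly
outwards: `t • h ∈ ℋ_x` for some `t > 1`. For every `h ∈ ℋ_x` and `0 ≤ s < 1`, the identity
`x + s⟪h, Y⟫ = (1 - s) x + s (x + ⟪h, Y⟫)` shows `s • h ∈ ℋ_x^r` for any rational
`0 < r ≤ (1 - s) x`. With `s = t⁻¹` this gives the first inclusion, and letting `s ↑ 1` the
density of the union in `ℋ_x`, which is closed because quasi-sure inequalities pass to limits
along sequences. -/

theorem eventually_lineMap_mem_of_mem_intrinsicInterior {V P : Type*} [NormedAddCommGroup V]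
    [NormedSpace ℝ V] [MetricSpace P] [NormedAddTorsor V P] {s : Set P} {a h : P}
    (ha : a ∈ affineSpan ℝ s) (hh : h ∈ intrinsicInterior ℝ s) :
    ∀ᶠ t in 𝓝 (1 : ℝ), AffineMap.lineMap a h t ∈ s := by
  obtain ⟨y, hy, rfl⟩ := mem_intrinsicInterior.mp hh
  let f : ℝ → affineSpan ℝ s := fun t =>
    ⟨AffineMap.lineMap a y t, AffineMap.lineMap_mem t ha y.2⟩
  have hf : Continuous f := AffineMap.lineMap_continuous.subtype_mk _
  have hf1 : f 1 = y := Subtype.ext (AffineMap.lineMap_apply_one _ _)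
  have hlim : Tendsto f (𝓝 1) (𝓝 y) := hf1 ▸ hf.tendsto 1
  exact (hlim.eventually_mem (isOpen_interior.mem_nhds hy)).mono fun _ ht =>
    interior_subset (s := Subtype.val ⁻¹' s) ht

theorem exists_one_lt_smul_mem_of_mem_intrinsicInterior {V : Type*} [NormedAddCommGroup V]
    [NormedSpace ℝ V] {s : Set V} {h : V} (h0 : (0 : V) ∈ s)
    (hh : h ∈ intrinsicInterior ℝ s) :
    ∃ t : ℝ, 1 < t ∧ t • h ∈ s := by
  have hev := eventually_lineMap_mem_of_mem_intrinsicInterior (subset_affineSpan ℝ s h0) hh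
  obtain ⟨t, hts, ht1⟩ :=
    ((hev.filter_mono nhdsWithin_le_nhds).and (self_mem_nhdsWithin (s := Ioi 1))).exists
  refine ⟨t, ht1, ?_⟩
  simpa [AffineMap.lineMap_apply_module] using hts

theorem isClosed_setOf_ae_mem {E Ω F : Type*} [TopologicalSpace E] [SequentialSpace E]
    [TopologicalSpace F] [MeasurableSpace Ω] {μ : Measure Ω} {f : E → Ω → F} {C : Set F}
    (hf : ∀ ω, Continuous fun h => f h ω) (hC : IsClosed C) :
    IsClosed {h | ∀ᵐ ω ∂μ, f h ω ∈ C} := by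
  refine IsSeqClosed.isClosed fun u h hu hlim => ?_
  filter_upwards [ae_all_iff.2 hu] with ω hω
  exact hC.mem_of_tendsto (((hf ω).tendsto h).comp hlim) (Eventually.of_forall hω)

section AdmissibleSet

variable {Ω E : Type*} [MeasurableSpace Ω] [NormedAddCommGroup E] [InnerProductSpace ℝ E]
  {𝒬 : Set (Measure Ω)} {Y : Ω → E} {x r : ℝ} {h : E}

/-- `ℋ_x^r` of the paper, and `ℋ_x` for `r = 0`. -/
def admissibleSet (𝒬 : Set (Measure Ω)) (Y : Ω → E) (x r : ℝ) : Set E :=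
  {h | ∀ P ∈ 𝒬, ∀ᵐ ω ∂P, r ≤ x + inner ℝ h (Y ω)}

theorem setOf_forall_measure_eq_one_eq_admissibleSet [MeasurableSpace E]
    [OpensMeasurableSpace E] (hY : Measurable Y) (h𝒬 : ∀ P ∈ 𝒬, IsProbabilityMeasure P) :
    {h : E | ∀ P ∈ 𝒬, P {ω | r ≤ x + inner ℝ h (Y ω)} = 1} =
      admissibleSet 𝒬 Y x r := by
  ext h
  refine forall₂_congr fun P hP => ?_
  have := h𝒬 P hP
  have hcont : Continuous fun v : E => x + inner ℝ h v := by fun_prop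
  have hmeas : MeasurableSet {ω | r ≤ x + inner ℝ h (Y ω)} :=
    (isClosed_le continuous_const hcont).measurableSet.preimage hY
  rw [ae_iff_measure_eq hmeas.nullMeasurableSet, measure_univ]

theorem admissibleSet_anti : Antitone (admissibleSet 𝒬 Y x) :=
  fun _ _ hrs _ hh P hP => (hh P hP).mono fun _ hω => hrs.trans hω

theorem isClosed_admissibleSet : IsClosed (admissibleSet 𝒬 Y x r) := by
  simp only [admissibleSet, ofPred_forall]
  exact isClosed_iInter fun P => isClosed_iInter fun _ =>
    isClosed_setOf_ae_mem (C := Ici r) (fun ω => by fun_prop) isClosed_Ici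

theorem zero_mem_admissibleSet (hr : r ≤ x) : 0 ∈ admissibleSet 𝒬 Y x r :=
  fun _ _ => Eventually.of_forall fun _ => by simpa using hr

theorem smul_mem_admissibleSet {t : ℝ} (hh : h ∈ admissibleSet 𝒬 Y x 0) (ht : 0 ≤ t) :
    t • h ∈ admissibleSet 𝒬 Y x ((1 - t) * x) := fun P hP => by
  filter_upwards [hh P hP] with ω hω
  rw [real_inner_smul_left]
  linarith [mul_nonneg ht hω]

theorem mem_iUnion_rat_admissibleSet (hr : 0 < r) (hh : h ∈ admissibleSet 𝒬 Y x r) :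
    h ∈ ⋃ q ∈ {q : ℚ | 0 < q}, admissibleSet 𝒬 Y x q := by
  obtain ⟨q, hq0, hqr⟩ := exists_rat_btwn hr
  exact mem_biUnion (x := q) (Rat.cast_pos.mp hq0) (admissibleSet_anti hqr.le hh)

theorem smul_mem_iUnion_rat_admissibleSet {t : ℝ} (hx : 0 < x)
    (hh : h ∈ admissibleSet 𝒬 Y x 0) (ht0 : 0 ≤ t) (ht1 : t < 1) :
    t • h ∈ ⋃ q ∈ {q : ℚ | 0 < q}, admissibleSet 𝒬 Y x q :=
  mem_iUnion_rat_admissibleSet (mul_pos (sub_pos.mpr ht1) hx) (smul_mem_admissibleSet hh ht0)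

theorem intrinsicInterior_admissibleSet_subset (hx : 0 < x) :
    intrinsicInterior ℝ (admissibleSet 𝒬 Y x 0) ⊆
      ⋃ q ∈ {q : ℚ | 0 < q}, admissibleSet 𝒬 Y x q := by
  intro h hh
  obtain ⟨t, ht, hth⟩ :=
    exists_one_lt_smul_mem_of_mem_intrinsicInterior (zero_mem_admissibleSet hx.le) hh
  have hpos : 0 < t := one_pos.trans ht
  simpa [smul_smul, inv_mul_cancel₀ hpos.ne'] using
    smul_mem_iUnion_rat_admissibleSet hx hth (inv_nonneg.mpr hpos.le) (inv_lt_one_of_one_lt₀ ht)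

theorem iUnion_rat_admissibleSet_subset :
    ⋃ q ∈ {q : ℚ | 0 < q}, admissibleSet 𝒬 Y x q ⊆ admissibleSet 𝒬 Y x 0 :=
  iUnion₂_subset fun _ hq => admissibleSet_anti (Rat.cast_nonneg.mpr (le_of_lt hq))

theorem closure_iUnion_rat_admissibleSet (hx : 0 < x) :
    closure (⋃ q ∈ {q : ℚ | 0 < q}, admissibleSet 𝒬 Y x q) = admissibleSet 𝒬 Y x 0 := by
  refine (closure_minimal iUnion_rat_admissibleSet_subset isClosed_admissibleSet).antisymm
    fun h hh => ?_
  have hcont : Continuous fun t : ℝ => t • h := by fun_prop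
  have hlim : Tendsto (fun t : ℝ => t • h) (𝓝[<] 1) (𝓝 h) :=
    (hcont.tendsto' 1 h (one_smul ℝ h)).mono_left nhdsWithin_le_nhds
  refine mem_closure_of_tendsto hlim ?_
  filter_upwards [Ioo_mem_nhdsLT one_pos] with t ht
  exact smul_mem_iUnion_rat_admissibleSet hx hh ht.1.le ht.2

end AdmissibleSet

theorem ri_subset_union_Hxr_and_closure_general
    {d : ℕ} {Ω : Type*} [MeasurableSpace Ω]
    (Y : Ω → EuclideanSpace ℝ (Fin d)) (hY : Measurable Y)
    (𝒬 : Set (Measure Ω))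
    (h𝒬prob : ∀ P ∈ 𝒬, IsProbabilityMeasure P)
    (x : ℝ) (hx : 0 < x) :
    (intrinsicInterior ℝ {h : EuclideanSpace ℝ (Fin d) |
        ∀ P ∈ 𝒬, P {ω | 0 ≤ x + (inner ℝ h (Y ω) : ℝ)} = 1} ⊆
      ⋃ r ∈ {q : ℚ | 0 < q}, {h : EuclideanSpace ℝ (Fin d) |
        ∀ P ∈ 𝒬, P {ω | (r : ℝ) ≤ x + (inner ℝ h (Y ω) : ℝ)} = 1}) ∧
    (⋃ r ∈ {q : ℚ | 0 < q}, {h : EuclideanSpace ℝ (Fin d) |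
        ∀ P ∈ 𝒬, P {ω | (r : ℝ) ≤ x + (inner ℝ h (Y ω) : ℝ)} = 1} ⊆
      {h : EuclideanSpace ℝ (Fin d) |
        ∀ P ∈ 𝒬, P {ω | 0 ≤ x + (inner ℝ h (Y ω) : ℝ)} = 1}) ∧
    closure (⋃ r ∈ {q : ℚ | 0 < q}, {h : EuclideanSpace ℝ (Fin d) |
        ∀ P ∈ 𝒬, P {ω | (r : ℝ) ≤ x + (inner ℝ h (Y ω) : ℝ)} = 1}) =
      {h : EuclideanSpace ℝ (Fin d) |
        ∀ P ∈ 𝒬, P {ω | 0 ≤ x + (inner ℝ h (Y ω) : ℝ)} = 1} := by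
  simp only [setOf_forall_measure_eq_one_eq_admissibleSet hY h𝒬prob]
  exact ⟨intrinsicInterior_admissibleSet_subset hx, iUnion_rat_admissibleSet_subset,
    closure_iUnion_rat_admissibleSet hx⟩

/-- With `ℋ_x^r = {h : x + h⬝Y ≥ r 𝒬-q.s.}` for `r > 0`,
`Ri(ℋ_x) ⊆ ⋃_{r ∈ ℚ, r>0} ℋ_x^r ⊆ ℋ_x` and the closure of the union equals `ℋ_x`. -/
theorem ri_subset_union_Hxr_and_closure
    {d : ℕ} {Ω : Type*} [MeasurableSpace Ω]
    (Y : Ω → EuclideanSpace ℝ (Fin d)) (hY : Measurable Y)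
    (b : ℝ) (hb : 0 < b) (hYb : ∀ ω, ∀ i : Fin d, -b ≤ Y ω i)
    (𝒬 : Set (Measure Ω)) (h𝒬ne : 𝒬.Nonempty)
    (h𝒬prob : ∀ P ∈ 𝒬, IsProbabilityMeasure P)
    (x : ℝ) (hx : 0 < x) :
    (intrinsicInterior ℝ {h : EuclideanSpace ℝ (Fin d) |
        ∀ P ∈ 𝒬, P {ω | 0 ≤ x + (inner ℝ h (Y ω) : ℝ)} = 1} ⊆
      ⋃ r ∈ {q : ℚ | 0 < q}, {h : EuclideanSpace ℝ (Fin d) |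
        ∀ P ∈ 𝒬, P {ω | (r : ℝ) ≤ x + (inner ℝ h (Y ω) : ℝ)} = 1}) ∧
    (⋃ r ∈ {q : ℚ | 0 < q}, {h : EuclideanSpace ℝ (Fin d) |
        ∀ P ∈ 𝒬, P {ω | (r : ℝ) ≤ x + (inner ℝ h (Y ω) : ℝ)} = 1} ⊆
      {h : EuclideanSpace ℝ (Fin d) |
        ∀ P ∈ 𝒬, P {ω | 0 ≤ x + (inner ℝ h (Y ω) : ℝ)} = 1}) ∧
    closure (⋃ r ∈ {q : ℚ | 0 < q}, {h : EuclideanSpace ℝ (Fin d) |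
        ∀ P ∈ 𝒬, P {ω | (r : ℝ) ≤ x + (inner ℝ h (Y ω) : ℝ)} = 1}) =
      {h : EuclideanSpace ℝ (Fin d) |
        ∀ P ∈ 𝒬, P {ω | 0 ≤ x + (inner ℝ h (Y ω) : ℝ)} = 1} :=
  ri_subset_union_Hxr_and_closure_general Y hY 𝒬 h𝒬prob x hx
end

section
/- In addition to the assumptions of the previous statement, suppose |Y| is bounded: Y_i ≤ c for all i for some finite c ≥ 0. Then Ri(ℋ_x) = ⋃_{r ∈ ℚ, r>0} ℋ_x^r. -/
/-!
A point `h` of `ℋ_x` that is interior relative to the affine span can be pushed a little further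
away from `0 ∈ ℋ_x`: `(1 + t) • h ∈ ℋ_x` for some `t > 0`, which forces `x + ⟪h, Y⟫ ≥ t x / (1 + t)`
quasi-surely. Conversely, if `x + ⟪h, Y⟫ ≥ r` quasi-surely and `‖Y‖ ≤ K`, then every `h'` within
`r / K` of `h` lies in `ℋ_x`, so `h` is even a topological interior point.
-/

open Set MeasureTheory Metric Filter Topology
open scoped RealInnerProductSpace

theorem eventually_add_smul_sub_mem_of_mem_intrinsicInterior {E : Type*}
    [NormedAddCommGroup E] [NormedSpace ℝ E] {s : Set E} {p h : E} (hp : p ∈ s)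
    (hh : h ∈ intrinsicInterior ℝ s) : ∀ᶠ t in 𝓝 (0 : ℝ), h + t • (h - p) ∈ s := by
  obtain ⟨y, hy, rfl⟩ := mem_intrinsicInterior.1 hh
  have hline (t : ℝ) : (y : E) + t • ((y : E) - p) ∈ affineSpan ℝ s := by
    simpa [vsub_eq_sub, vadd_eq_add, add_comm] using
      AffineSubspace.smul_vsub_vadd_mem _ t y.2 (subset_affineSpan ℝ s hp) y.2
  let f : ℝ → affineSpan ℝ s := fun t ↦ ⟨y + t • ((y : E) - p), hline t⟩
  have hf : Continuous f := by fun_prop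
  have hf0 : f 0 = y := Subtype.ext (by simp [f])
  exact (hf.tendsto 0).eventually (hf0 ▸ mem_interior_iff_mem_nhds.1 hy)

theorem exists_pos_norm_le_of_forall_apply_mem_Icc {Ω ι : Type*} [Fintype ι]
    (Y : Ω → EuclideanSpace ℝ ι) {b c : ℝ} (hYb : ∀ ω i, -b ≤ Y ω i) (hYc : ∀ ω i, Y ω i ≤ c) :
    ∃ K > 0, ∀ ω, ‖Y ω‖ ≤ K := by
  have hbdd : Bornology.IsBounded (range Y) :=
    ((PiLp.antilipschitzWith_ofLp 2 _).isBounded_preimage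
      (isBounded_Icc (fun _ ↦ -b) (fun _ ↦ c))).subset
      (range_subset_iff.2 fun ω ↦ ⟨fun i ↦ hYb ω i, fun i ↦ hYc ω i⟩)
  obtain ⟨K, hK, hYK⟩ := hbdd.exists_pos_norm_le
  exact ⟨K, hK, fun ω ↦ hYK _ (mem_range_self ω)⟩

section QuasiSure

variable {Ω E : Type*} [MeasurableSpace Ω] [NormedAddCommGroup E] [InnerProductSpace ℝ E]
  {𝒬 : Set (Measure Ω)} {Y : Ω → E} {x r s K : ℝ} {h h' : E}

/-- The paper's `ℋ_x^r`; its `ℋ_x` is `qsAbove 𝒬 Y x 0`. -/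
def qsAbove (𝒬 : Set (Measure Ω)) (Y : Ω → E) (x r : ℝ) : Set E :=
  {h | ∀ P ∈ 𝒬, P {ω | r ≤ x + ⟪h, Y ω⟫} = 1}

theorem mem_qsAbove_of_imp (h𝒬 : ∀ P ∈ 𝒬, IsProbabilityMeasure P) (hh : h ∈ qsAbove 𝒬 Y x r)
    (himp : ∀ ω, r ≤ x + ⟪h, Y ω⟫ → s ≤ x + ⟪h', Y ω⟫) : h' ∈ qsAbove 𝒬 Y x s := by
  intro P hP
  have := h𝒬 P hP
  exact le_antisymm prob_le_one ((hh P hP).symm.le.trans (measure_mono fun ω ↦ himp ω))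

theorem qsAbove_anti (h𝒬 : ∀ P ∈ 𝒬, IsProbabilityMeasure P) :
    Antitone (qsAbove 𝒬 Y x) :=
  fun _ _ hrs _ hh ↦ mem_qsAbove_of_imp h𝒬 hh fun _ hω ↦ hrs.trans hω

theorem zero_mem_qsAbove (h𝒬 : ∀ P ∈ 𝒬, IsProbabilityMeasure P) (hr : r ≤ x) :
    (0 : E) ∈ qsAbove 𝒬 Y x r := by
  intro P hP
  have := h𝒬 P hP
  simp [hr]

theorem mem_qsAbove_of_one_add_smul_mem (h𝒬 : ∀ P ∈ 𝒬, IsProbabilityMeasure P) {t : ℝ}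
    (ht : 0 < t) (hh : (1 + t) • h ∈ qsAbove 𝒬 Y x 0) : h ∈ qsAbove 𝒬 Y x (t * x / (1 + t)) := by
  refine mem_qsAbove_of_imp h𝒬 hh fun ω hω ↦ ?_
  rw [real_inner_smul_left] at hω
  rw [div_le_iff₀ (by linarith)]
  nlinarith

theorem closedBall_subset_qsAbove_zero (h𝒬 : ∀ P ∈ 𝒬, IsProbabilityMeasure P) (hK : 0 < K)
    (hYK : ∀ ω, ‖Y ω‖ ≤ K) (hh : h ∈ qsAbove 𝒬 Y x r) :
    closedBall h (r / K) ⊆ qsAbove 𝒬 Y x 0 := by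
  intro h' hh'
  rw [mem_closedBall, dist_eq_norm] at hh'
  refine mem_qsAbove_of_imp h𝒬 hh fun ω hω ↦ ?_
  have hdiff : |⟪h' - h, Y ω⟫| ≤ r := calc
    |⟪h' - h, Y ω⟫| ≤ ‖h' - h‖ * ‖Y ω‖ := abs_real_inner_le_norm _ _
    _ ≤ r / K * K := mul_le_mul hh' (hYK ω) (norm_nonneg _) ((norm_nonneg _).trans hh')
    _ = r := div_mul_cancel₀ r hK.ne'
  rw [inner_sub_left] at hdiff
  linarith [(abs_le.1 hdiff).1]

theorem exists_pos_mem_qsAbove_of_mem_intrinsicInterior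
    (h𝒬 : ∀ P ∈ 𝒬, IsProbabilityMeasure P) (hx : 0 < x)
    (hh : h ∈ intrinsicInterior ℝ (qsAbove 𝒬 Y x 0)) : ∃ r > 0, h ∈ qsAbove 𝒬 Y x r := by
  have hev := eventually_add_smul_sub_mem_of_mem_intrinsicInterior
    (zero_mem_qsAbove h𝒬 hx.le) hh
  obtain ⟨t, hth, ht : 0 < t⟩ :=
    ((hev.filter_mono (nhdsWithin_le_nhds (s := Ioi 0))).and self_mem_nhdsWithin).exists
  rw [sub_zero] at hth
  exact ⟨t * x / (1 + t), by positivity,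
    mem_qsAbove_of_one_add_smul_mem h𝒬 ht (by rwa [add_smul, one_smul])⟩

theorem qsAbove_subset_interior_qsAbove_zero (h𝒬 : ∀ P ∈ 𝒬, IsProbabilityMeasure P)
    (hK : 0 < K) (hYK : ∀ ω, ‖Y ω‖ ≤ K) (hr : 0 < r) :
    qsAbove 𝒬 Y x r ⊆ interior (qsAbove 𝒬 Y x 0) := fun _ hh ↦
  mem_interior_iff_mem_nhds.2 <| mem_of_superset (closedBall_mem_nhds _ (div_pos hr hK))
    (closedBall_subset_qsAbove_zero h𝒬 hK hYK hh)

end QuasiSure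

theorem ri_eq_union_Hxr_of_bounded_general
    {d : ℕ} {Ω : Type*} [MeasurableSpace Ω]
    (Y : Ω → EuclideanSpace ℝ (Fin d))
    (b : ℝ) (hYb : ∀ ω, ∀ i : Fin d, -b ≤ Y ω i)
    (c : ℝ) (hYc : ∀ ω, ∀ i : Fin d, Y ω i ≤ c)
    (𝒬 : Set (Measure Ω))
    (h𝒬prob : ∀ P ∈ 𝒬, IsProbabilityMeasure P)
    (x : ℝ) (hx : 0 < x) :
    intrinsicInterior ℝ {h : EuclideanSpace ℝ (Fin d) |
        ∀ P ∈ 𝒬, P {ω | 0 ≤ x + (inner ℝ h (Y ω) : ℝ)} = 1} =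
      ⋃ r ∈ {q : ℚ | 0 < q}, {h : EuclideanSpace ℝ (Fin d) |
        ∀ P ∈ 𝒬, P {ω | (r : ℝ) ≤ x + (inner ℝ h (Y ω) : ℝ)} = 1} := by
  change intrinsicInterior ℝ (qsAbove 𝒬 Y x 0) = ⋃ q ∈ {q : ℚ | 0 < q}, qsAbove 𝒬 Y x q
  obtain ⟨K, hK, hYK⟩ := exists_pos_norm_le_of_forall_apply_mem_Icc Y hYb hYc
  ext h
  simp only [mem_iUnion, mem_ofPred_eq, exists_prop]
  constructor
  · intro hh
    obtain ⟨r, hr, hhr⟩ := exists_pos_mem_qsAbove_of_mem_intrinsicInterior h𝒬prob hx hh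
    obtain ⟨q, hq0, hqr⟩ := exists_rat_btwn hr
    exact ⟨q, Rat.cast_pos.1 hq0, qsAbove_anti h𝒬prob hqr.le hhr⟩
  · rintro ⟨q, hq, hhq⟩
    exact interior_subset_intrinsicInterior
      (qsAbove_subset_interior_qsAbove_zero h𝒬prob hK hYK (Rat.cast_pos.2 hq) hhq)

/-- If additionally `Y` is bounded above componentwise (`Y_i ≤ c`), then
`Ri(ℋ_x) = ⋃_{r ∈ ℚ, r>0} ℋ_x^r`. -/
theorem ri_eq_union_Hxr_of_bounded
    {d : ℕ} {Ω : Type*} [MeasurableSpace Ω]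
    (Y : Ω → EuclideanSpace ℝ (Fin d)) (hY : Measurable Y)
    (b : ℝ) (hb : 0 < b) (hYb : ∀ ω, ∀ i : Fin d, -b ≤ Y ω i)
    (c : ℝ) (hc : 0 ≤ c) (hYc : ∀ ω, ∀ i : Fin d, Y ω i ≤ c)
    (𝒬 : Set (Measure Ω)) (h𝒬ne : 𝒬.Nonempty)
    (h𝒬prob : ∀ P ∈ 𝒬, IsProbabilityMeasure P)
    (x : ℝ) (hx : 0 < x) :
    intrinsicInterior ℝ {h : EuclideanSpace ℝ (Fin d) |
        ∀ P ∈ 𝒬, P {ω | 0 ≤ x + (inner ℝ h (Y ω) : ℝ)} = 1} =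
      ⋃ r ∈ {q : ℚ | 0 < q}, {h : EuclideanSpace ℝ (Fin d) |
        ∀ P ∈ 𝒬, P {ω | (r : ℝ) ≤ x + (inner ℝ h (Y ω) : ℝ)} = 1} :=
  ri_eq_union_Hxr_of_bounded_general Y b hYb c hYc 𝒬 h𝒬prob x hx
end

section
/- Let V : Ω × ℝ → ℝ ∪ {±∞} be such that V(ω,·) is non-decreasing, concave, and upper semicontinuous for each ω, with V(ω,x) = -∞ for x < 0. Fix ω such that the relative interior of Dom V(ω,·) equals (0,∞). Then for all λ ≥ 1 and all x ∈ ℝ: V(ω, λx) ≤ 2λ( V(ω, x + 1/2) + V⁻(ω, 1/4) ), where V⁻ denotes the negative part. -/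
/-! With `z = x + 1/2 ≥ 1/2`, monotonicity gives `V(λx) ≤ V(λz)`. Concavity on the chord from `1/4`
to `λz` through `z` gives `V(λz) ≤ V(z) + (λz - z)/(z - 1/4) · (V(z) - V(1/4))`, and `z - 1/4 ≥ z/2`
bounds the slope factor by `2(λ - 1)`; the remaining terms are absorbed using
`V(z) ≥ V(1/4) ≥ -V⁻(1/4)`. -/

open Set

theorem le_secant_extension_of_concave {f : ℝ → EReal}
    (hconc : ∀ (u v : ℝ) (t : ℝ), 0 < t → t < 1 →
      ((t : ℝ) : EReal) * f u + ((1 - t : ℝ) : EReal) * f v ≤ f (t * u + (1 - t) * v))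
    {a b c A B : ℝ} (hab : a < b) (hbc : b ≤ c) (hA : f a = A) (hB : f b = B) :
    f c ≤ ((B + (c - b) / (b - a) * (B - A) : ℝ) : EReal) := by
  rcases hbc.eq_or_lt with rfl | hbc
  · simp [hB]
  have hca : 0 < c - a := by linarith
  set t := (b - a) / (c - a)
  have htc : t * (c - a) = b - a := div_mul_cancel₀ _ hca.ne'
  have ht0 : 0 < t := div_pos (by linarith) hca
  have ht1 : t < 1 := (div_lt_one hca).2 (by linarith)
  have hchord := hconc c a t ht0 ht1
  rw [show t * c + (1 - t) * a = b by linear_combination htc, hA, hB] at hchord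
  generalize f c = y at hchord ⊢
  induction y using EReal.rec with
  | bot => exact bot_le
  | top =>
    rw [EReal.coe_mul_top_of_pos ht0, ← EReal.coe_mul, EReal.top_add_coe] at hchord
    exact absurd hchord (by simp)
  | coe C =>
    have hreal : t * C + (1 - t) * A ≤ B := by exact_mod_cast hchord
    refine EReal.coe_le_coe_iff.2 ?_
    rw [← sub_nonneg] at hreal ⊢
    have hba : 0 < b - a := by linarith
    have hgap : B + (c - b) / (b - a) * (B - A) - C
        = (c - a) / (b - a) * (B - (t * C + (1 - t) * A)) := by
      field_simp
      linear_combination (C - A) * htc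
    rw [hgap]
    exact mul_nonneg (div_nonneg hca.le hba.le) hreal

theorem add_div_mul_sub_le_two_mul_add_max_neg {lam z A B : ℝ} (hlam : 1 ≤ lam) (hz : 1 / 2 ≤ z)
    (hAB : A ≤ B) :
    B + (lam * z - z) / (z - 1 / 4) * (B - A) ≤ 2 * lam * (B + max (-A) 0) := by
  have hslope : (lam * z - z) / (z - 1 / 4) ≤ 2 * (lam - 1) := by
    rw [div_le_iff₀ (by linarith)]; nlinarith
  have := le_max_left (-A) 0
  have := le_max_right (-A) 0
  nlinarith [mul_le_mul_of_nonneg_right hslope (sub_nonneg.2 hAB)]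

theorem apply_mul_le_two_mul_add_max_neg {f : ℝ → EReal} (hmono : Monotone f)
    (hconc : ∀ (u v : ℝ) (t : ℝ), 0 < t → t < 1 →
      ((t : ℝ) : EReal) * f u + ((1 - t : ℝ) : EReal) * f v ≤ f (t * u + (1 - t) * v))
    (hpos : ∀ y, 0 < y → ⊥ < f y) {lam z : ℝ} (hlam : 1 ≤ lam) (hz : 1 / 2 ≤ z) :
    f (lam * z) ≤ ((2 * lam : ℝ) : EReal) * (f z + max (-(f (1 / 4))) 0) := by
  have hquarter : f (1 / 4) ≤ f z := hmono (by linarith)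
  rcases eq_top_or_lt_top (f z) with htop | hlt
  · have hmax : max (-(f (1 / 4))) 0 ≠ ⊥ := ne_bot_of_le_ne_bot EReal.zero_ne_bot (le_max_right _ _)
    rw [htop, EReal.top_add_of_ne_bot hmax, EReal.coe_mul_top_of_pos (by linarith)]
    exact le_top
  obtain ⟨B, hB⟩ : ∃ B : ℝ, f z = B := ⟨_, (EReal.coe_toReal hlt.ne (hpos z (by linarith)).ne').symm⟩
  obtain ⟨A, hA⟩ : ∃ A : ℝ, f (1 / 4) = A :=
    ⟨_, (EReal.coe_toReal (hquarter.trans_lt hlt).ne (hpos _ (by norm_num)).ne').symm⟩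
  rw [hA, hB] at hquarter
  calc f (lam * z) ≤ ((B + (lam * z - z) / (z - 1 / 4) * (B - A) : ℝ) : EReal) :=
        le_secant_extension_of_concave hconc (by linarith) (by nlinarith) hA hB
    _ ≤ ((2 * lam * (B + max (-A) 0) : ℝ) : EReal) :=
        EReal.coe_le_coe_iff.2 <|
          add_div_mul_sub_le_two_mul_add_max_neg hlam hz (EReal.coe_le_coe_iff.1 hquarter)
    _ = ((2 * lam : ℝ) : EReal) * (f z + max (-(f (1 / 4))) 0) := by
        rw [hA, hB, ← EReal.coe_neg, ← EReal.coe_zero, ← EReal.coe_strictMono.monotone.map_max]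
        norm_cast

theorem elasticity_estimate_general
    {Ω : Type*}
    (V : Ω → ℝ → EReal)
    (hmono : ∀ ω, Monotone (V ω))
    (hconc : ∀ ω, ∀ (u v : ℝ) (t : ℝ), 0 < t → t < 1 →
      ((t : ℝ) : EReal) * V ω u + ((1 - t : ℝ) : EReal) * V ω v ≤ V ω (t * u + (1 - t) * v))
    (hbot : ∀ ω, ∀ x : ℝ, x < 0 → V ω x = ⊥)
    (ω : Ω)
    (hdom : intrinsicInterior ℝ {x : ℝ | ⊥ < V ω x} = Ioi (0 : ℝ)) :
    ∀ lam : ℝ, 1 ≤ lam → ∀ x : ℝ,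
      V ω (lam * x) ≤
        ((2 * lam : ℝ) : EReal) * (V ω (x + 1 / 2) + max (-(V ω (1 / 4))) 0) := by
  intro lam hlam x
  rcases lt_or_ge x 0 with hx | hx
  · rw [hbot ω _ (by nlinarith)]
    exact bot_le
  have hpos : ∀ y : ℝ, 0 < y → ⊥ < V ω y := fun y hy =>
    (hdom ▸ intrinsicInterior_subset : Ioi (0 : ℝ) ⊆ {x : ℝ | ⊥ < V ω x}) hy
  calc V ω (lam * x) ≤ V ω (lam * (x + 1 / 2)) := hmono ω (by nlinarith)
    _ ≤ _ := apply_mul_le_two_mul_add_max_neg (hmono ω) (hconc ω) hpos hlam (by linarith)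

/-- Elasticity estimate: for `V(ω,·)` non-decreasing, concave, usc, equal
to `-∞` on `(-∞,0)`, and `ω` with `Ri(Dom V(ω,·)) = (0,∞)`, one has for all `λ ≥ 1`
and `x ∈ ℝ`: `V(ω, λx) ≤ 2λ (V(ω, x + 1/2) + V⁻(ω, 1/4))`. -/
theorem elasticity_estimate
    {Ω : Type*} [MeasurableSpace Ω]
    (V : Ω → ℝ → EReal)
    (hmono : ∀ ω, Monotone (V ω))
    (hconc : ∀ ω, ∀ (u v : ℝ) (t : ℝ), 0 < t → t < 1 →
      ((t : ℝ) : EReal) * V ω u + ((1 - t : ℝ) : EReal) * V ω v ≤ V ω (t * u + (1 - t) * v))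
    (husc : ∀ ω, UpperSemicontinuous (V ω))
    (hbot : ∀ ω, ∀ x : ℝ, x < 0 → V ω x = ⊥)
    (ω : Ω)
    (hdom : intrinsicInterior ℝ {x : ℝ | ⊥ < V ω x} = Ioi (0 : ℝ)) :
    ∀ lam : ℝ, 1 ≤ lam → ∀ x : ℝ,
      V ω (lam * x) ≤
        ((2 * lam : ℝ) : EReal) * (V ω (x + 1 / 2) + max (-(V ω (1 / 4))) 0) :=
  elasticity_estimate_general V hmono hconc hbot ω hdom
end

section
/- There exists a function F : ℝ² → ℝ such that F(x,·) is upper semicontinuous for every x, F(·,y) is upper semicontinuous for every y, yet F is not Lebesgue-measurable on ℝ² (hence not Borel-product measurable). Specifically, if A ⊆ ℝ² is a non-Lebesgue-measurable set meeting every line in at most two points, then F = 1_A works. -/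
open MeasureTheory Set Cardinal

namespace SepUSCAux

/-- A measurable subset of `ℝ` with positive measure has cardinality at least `𝔠`. -/
lemma continuum_le_mk_of_pos {S : Set ℝ} (hS : MeasurableSet S) (h : 0 < volume S) :
    𝔠 ≤ #S := by
  -- find a bounded piece of positive measure
  have hU : S = ⋃ n : ℕ, S ∩ Icc (-(n : ℝ)) n := by
    ext x
    simp only [mem_iUnion, mem_inter_iff, mem_Icc]
    constructor
    · intro hx
      obtain ⟨n, hn⟩ := exists_nat_ge |x|
      exact ⟨n, hx, neg_le_of_abs_le hn, le_of_abs_le hn⟩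
    · rintro ⟨n, hx, -⟩; exact hx
  have hex : ∃ n : ℕ, 0 < volume (S ∩ Icc (-(n : ℝ)) n) := by
    by_contra hc
    push_neg at hc
    have : volume S = 0 := by
      rw [hU]
      exact measure_iUnion_null fun n => le_antisymm (hc n) bot_le
    exact h.ne' this
  obtain ⟨n, hn⟩ := hex
  set T := S ∩ Icc (-(n : ℝ)) n with hT
  have hTm : MeasurableSet T := hS.inter measurableSet_Icc
  have hTfin : volume T ≠ ⊤ := by
    refine ne_top_of_le_ne_top ?_ (measure_mono inter_subset_right)
    simp [Real.volume_Icc]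
  obtain ⟨K, hKT, hKc, hK⟩ := hTm.exists_isCompact_lt_add hTfin hn.ne'
  have hKpos : 0 < volume K := by
    refine pos_iff_ne_zero.mpr fun h0 => ?_
    rw [h0, zero_add] at hK
    exact lt_irrefl _ hK
  have hKunc : ¬ K.Countable := fun hc => hKpos.ne' (hc.measure_zero volume)
  obtain ⟨f, hfK, -, hfinj⟩ := hKc.isClosed.exists_nat_bool_injection_of_not_countable hKunc
  have : 𝔠 ≤ #K := by
    rw [← Cardinal.two_power_aleph0]
    have : #(ℕ → Bool) = 2 ^ Cardinal.aleph0 := by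
      simp [Cardinal.mk_arrow]
    rw [← this]
    exact Cardinal.mk_le_of_injective
      (f := fun a => (⟨f a, hfK ⟨a, rfl⟩⟩ : K)) fun a b hab => hfinj (congrArg Subtype.val hab)
  exact this.trans (Cardinal.mk_le_mk_of_subset (hKT.trans inter_subset_left))

/-- From a measurable set of positive measure in the plane we can pick a point avoiding
small sets of abscissae and ordinates. -/
lemma exists_point_avoiding {K : Set (ℝ × ℝ)} (hKm : MeasurableSet K)
    (hKpos : 0 < volume K) {Sx Sy : Set ℝ} (hSx : #Sx < 𝔠) (hSy : #Sy < 𝔠) :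
    ∃ p : ℝ × ℝ, p ∈ K ∧ p.1 ∉ Sx ∧ p.2 ∉ Sy := by
  have hvol : (volume : Measure (ℝ × ℝ)) = (volume : Measure ℝ).prod volume :=
    MeasureTheory.Measure.volume_eq_prod ℝ ℝ
  -- the set of x whose section has positive measure is non-null
  set T : Set ℝ := {x | volume (Prod.mk x ⁻¹' K) ≠ 0} with hTdef
  have hTm : MeasurableSet T := by
    have := measurable_measure_prodMk_left (ν := (volume : Measure ℝ)) hKm
    exact this (MeasurableSet.singleton 0) |>.compl
  have hTpos : 0 < volume T := by
    refine pos_iff_ne_zero.mpr fun h0 => ?_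
    have : (volume : Measure ℝ).prod volume K = 0 := by
      rw [Measure.measure_prod_null hKm]
      filter_upwards [measure_eq_zero_iff_ae_notMem.mp h0] with x hx
      simpa [hTdef] using hx
    rw [← hvol] at this
    exact hKpos.ne' this
  have hTcard : 𝔠 ≤ #T := continuum_le_mk_of_pos hTm hTpos
  have hTx : ¬ T ⊆ Sx := fun hsub =>
    absurd (hTcard.trans (Cardinal.mk_le_mk_of_subset hsub)) (not_le.mpr hSx)
  obtain ⟨x, hxT, hxSx⟩ := not_subset.mp hTx
  -- now pick y in the section of x
  have hsecm : MeasurableSet (Prod.mk x ⁻¹' K) := measurable_prodMk_left hKm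
  have hsecpos : 0 < volume (Prod.mk x ⁻¹' K) := pos_iff_ne_zero.mpr hxT
  have hseccard : 𝔠 ≤ #(Prod.mk x ⁻¹' K) := continuum_le_mk_of_pos hsecm hsecpos
  have hsy : ¬ (Prod.mk x ⁻¹' K) ⊆ Sy := fun hsub =>
    absurd (hseccard.trans (Cardinal.mk_le_mk_of_subset hsub)) (not_le.mpr hSy)
  obtain ⟨y, hyK, hySy⟩ := not_subset.mp hsy
  exact ⟨(x, y), hyK, hxSx, hySy⟩

/-- The type of closed subsets of the plane with positive volume. -/
def PosClosed : Type := {K : Set (ℝ × ℝ) // IsClosed K ∧ 0 < volume K}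

lemma mk_posClosed_le : #PosClosed ≤ 𝔠 := by
  obtain ⟨b, hbc, -, hb⟩ := TopologicalSpace.exists_countable_basis (ℝ × ℝ)
  have hinj : Function.Injective fun K : PosClosed => {s : b | (s : Set (ℝ × ℝ)) ⊆ (K.1)ᶜ} := by
    intro K K' h
    have hs : {s ∈ b | s ⊆ (K.1)ᶜ} = {s ∈ b | s ⊆ (K'.1)ᶜ} := by
      ext s
      constructor
      · rintro ⟨hsb, hsub⟩
        exact ⟨hsb, Set.ext_iff.mp h ⟨s, hsb⟩ |>.mp hsub⟩
      · rintro ⟨hsb, hsub⟩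
        exact ⟨hsb, Set.ext_iff.mp h ⟨s, hsb⟩ |>.mpr hsub⟩
    have h1 : (K.1)ᶜ = (K'.1)ᶜ := by
      rw [hb.open_eq_sUnion' K.2.1.isOpen_compl, hb.open_eq_sUnion' K'.2.1.isOpen_compl, hs]
    apply Subtype.ext
    rw [← compl_compl K.1, h1, compl_compl]
  calc #PosClosed ≤ #(Set b) := Cardinal.mk_le_of_injective hinj
    _ = 2 ^ #b := Cardinal.mk_set
    _ ≤ 2 ^ Cardinal.aleph0 := by
        apply Cardinal.power_le_power_left two_ne_zero
        exact Cardinal.mk_le_aleph0_iff.mpr hbc.to_subtype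
    _ = 𝔠 := Cardinal.two_power_aleph0

noncomputable section

/-- The canonical well-order of size continuum. -/
abbrev C : Type := (Cardinal.continuum).ord.ToType

variable (e : C → PosClosed)

/-- One step of the transfinite construction: pick a point of the `t`-th closed set whose
coordinates avoid all previously chosen coordinates. -/
def step (t : C) (ih : ∀ s : C, s < t → ℝ × ℝ) : ℝ × ℝ :=
  (exists_point_avoiding (e t).2.1.measurableSet (e t).2.2
    (Sx := Set.range fun s : Iio t => (ih s (mem_Iio.mp s.2)).1)
    (Sy := Set.range fun s : Iio t => (ih s (mem_Iio.mp s.2)).2)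
    (Cardinal.mk_range_le.trans_lt (Cardinal.mk_Iio_ord_toType t))
    (Cardinal.mk_range_le.trans_lt (Cardinal.mk_Iio_ord_toType t))).choose

/-- The transfinite sequence of chosen points. -/
def pick : C → ℝ × ℝ :=
  WellFounded.fix wellFounded_lt (step e)

lemma pick_eq (t : C) : pick e t = step e t fun s _ => pick e s :=
  WellFounded.fix_eq _ _ _

lemma pick_spec (t : C) :
    pick e t ∈ (e t).1 ∧
      (pick e t).1 ∉ (Set.range fun s : Iio t => (pick e s).1) ∧
      (pick e t).2 ∉ (Set.range fun s : Iio t => (pick e s).2) := by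
  rw [pick_eq]
  unfold step
  exact (exists_point_avoiding (e t).2.1.measurableSet (e t).2.2
    (Cardinal.mk_range_le.trans_lt (Cardinal.mk_Iio_ord_toType t))
    (Cardinal.mk_range_le.trans_lt (Cardinal.mk_Iio_ord_toType t))).choose_spec

lemma pick_fst_ne {s t : C} (h : s < t) : (pick e s).1 ≠ (pick e t).1 := fun hc =>
  (pick_spec e t).2.1 ⟨⟨s, h⟩, hc⟩

lemma pick_snd_ne {s t : C} (h : s < t) : (pick e s).2 ≠ (pick e t).2 := fun hc =>
  (pick_spec e t).2.2 ⟨⟨s, h⟩, hc⟩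

/-- The key construction: a set in the plane meeting every vertical and horizontal line in at
most one point, yet meeting every closed set of positive measure. -/
lemma exists_bad_set : ∃ A : Set (ℝ × ℝ),
    (∀ x : ℝ, {y : ℝ | (x, y) ∈ A}.Subsingleton) ∧
    (∀ y : ℝ, {x : ℝ | (x, y) ∈ A}.Subsingleton) ∧
    (∀ K : Set (ℝ × ℝ), IsClosed K → 0 < volume K → (K ∩ A).Nonempty) := by
  have hne : Nonempty PosClosed := by
    refine ⟨⟨(Icc (0:ℝ) 1) ×ˢ (Icc (0:ℝ) 1), isClosed_Icc.prod isClosed_Icc, ?_⟩⟩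
    rw [Measure.volume_eq_prod, Measure.prod_prod, Real.volume_Icc]
    norm_num
  have hle : #PosClosed ≤ #C := by
    rw [Cardinal.mk_ord_toType]
    exact mk_posClosed_le
  obtain ⟨emb⟩ := Cardinal.le_def _ _ |>.mp hle
  set e : C → PosClosed := Function.invFun emb with he
  have hesurj : Function.Surjective e := Function.invFun_surjective emb.injective
  refine ⟨Set.range (pick e), ?_, ?_, ?_⟩
  · intro x y1 hy1 y2 hy2
    obtain ⟨s, hs⟩ := hy1
    obtain ⟨t, ht⟩ := hy2
    rcases lt_trichotomy s t with h | h | h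
    · exact absurd (by rw [hs, ht] : (pick e s).1 = (pick e t).1) (pick_fst_ne e h)
    · subst h
      exact congrArg Prod.snd (hs.symm.trans ht)
    · exact absurd (by rw [hs, ht] : (pick e t).1 = (pick e s).1) (pick_fst_ne e h)
  · intro y x1 hx1 x2 hx2
    obtain ⟨s, hs⟩ := hx1
    obtain ⟨t, ht⟩ := hx2
    rcases lt_trichotomy s t with h | h | h
    · exact absurd (by rw [hs, ht] : (pick e s).2 = (pick e t).2) (pick_snd_ne e h)
    · subst h
      exact congrArg Prod.fst (hs.symm.trans ht)
    · exact absurd (by rw [hs, ht] : (pick e t).2 = (pick e s).2) (pick_snd_ne e h)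
  · intro K hKc hKpos
    obtain ⟨t, ht⟩ := hesurj ⟨K, hKc, hKpos⟩
    refine ⟨pick e t, ?_, ⟨t, rfl⟩⟩
    have := (pick_spec e t).1
    rw [ht] at this
    exact this

end

end SepUSCAux

/-- There is a function `F : ℝ² → ℝ` which is separately upper
semicontinuous in each variable, yet not Lebesgue-measurable on `ℝ²` (hence not
measurable for the product Borel sigma-algebra). One can take `F = 1_A` for a
non-Lebesgue-measurable set `A` meeting every line in at most two points. -/
theorem exists_separately_usc_not_jointly_measurable :
    ∃ F : ℝ → ℝ → ℝ,
      (∀ x : ℝ, UpperSemicontinuous (fun y => F x y)) ∧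
      (∀ y : ℝ, UpperSemicontinuous (fun x => F x y)) ∧
      ¬ NullMeasurable (fun p : ℝ × ℝ => F p.1 p.2) (volume : Measure (ℝ × ℝ)) ∧
      ¬ Measurable (fun p : ℝ × ℝ => F p.1 p.2) := by
  classical
  obtain ⟨A, hvert, hhor, hmeet⟩ := SepUSCAux.exists_bad_set
  refine ⟨fun x y => if (x, y) ∈ A then (1 : ℝ) else 0, ?_, ?_, ?_, ?_⟩
  · intro x
    have hcl : IsClosed {y : ℝ | (x, y) ∈ A} := by
      rcases (hvert x).eq_empty_or_singleton with h | ⟨y0, h⟩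
      · rw [h]; exact isClosed_empty
      · rw [h]; exact isClosed_singleton
    have heq : (fun y => if (x, y) ∈ A then (1 : ℝ) else 0)
        = Set.indicator {y : ℝ | (x, y) ∈ A} (fun _ => (1 : ℝ)) := by
      ext y
      by_cases hmem : (x, y) ∈ A
      · simp [Set.indicator_of_mem, hmem, Set.mem_setOf_eq]
      · simp [Set.indicator_of_notMem, hmem, Set.mem_setOf_eq]
    rw [heq]
    exact hcl.upperSemicontinuous_indicator zero_le_one
  · intro y
    have hcl : IsClosed {x : ℝ | (x, y) ∈ A} := by
      rcases (hhor y).eq_empty_or_singleton with h | ⟨x0, h⟩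
      · rw [h]; exact isClosed_empty
      · rw [h]; exact isClosed_singleton
    have heq : (fun x => if (x, y) ∈ A then (1 : ℝ) else 0)
        = Set.indicator {x : ℝ | (x, y) ∈ A} (fun _ => (1 : ℝ)) := by
      ext x
      by_cases hmem : (x, y) ∈ A
      · simp [Set.indicator_of_mem, hmem, Set.mem_setOf_eq]
      · simp [Set.indicator_of_notMem, hmem, Set.mem_setOf_eq]
    rw [heq]
    exact hcl.upperSemicontinuous_indicator zero_le_one
  · intro hNM
    -- `A` is a null-measurable set
    have hpre : (fun p : ℝ × ℝ => if (p.1, p.2) ∈ A then (1 : ℝ) else 0) ⁻¹' {1} = A := by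
      ext p
      simp only [mem_preimage, mem_singleton_iff]
      by_cases hp : (p.1, p.2) ∈ A
      · simp [hp]
      · simp [hp]
    have hA : NullMeasurableSet A (volume : Measure (ℝ × ℝ)) := by
      have := hNM (measurableSet_singleton (1 : ℝ))
      rwa [hpre] at this
    obtain ⟨B, hBA, hBm, hae⟩ := hA.exists_measurable_subset_ae_eq
    have hB0 : volume B = 0 := by
      rw [Measure.volume_eq_prod ℝ ℝ, Measure.measure_prod_null hBm]
      refine Filter.Eventually.of_forall fun x => ?_
      have hsub : Prod.mk x ⁻¹' B ⊆ {y | (x, y) ∈ A} := fun y hy => hBA hy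
      exact ((hvert x).anti hsub).measure_zero volume
    have hA0 : volume A = 0 := by
      rw [← measure_congr hae]
      exact hB0
    obtain ⟨N, hAN, hNm, hN0⟩ := exists_measurable_superset_of_null hA0
    set M := ((Icc (0 : ℝ) 1) ×ˢ (Icc (0 : ℝ) 1)) \ N with hM
    have hMm : MeasurableSet M := (measurableSet_Icc.prod measurableSet_Icc).diff hNm
    have hMvol : volume M = 1 := by
      rw [hM, measure_diff_null hN0, Measure.volume_eq_prod, Measure.prod_prod,
        Real.volume_Icc]
      norm_num
    obtain ⟨K, hKM, hKc, hK⟩ := hMm.exists_isCompact_lt_add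
      (by rw [hMvol]; exact ENNReal.one_ne_top)
      (ε := volume M) (by rw [hMvol]; exact one_ne_zero)
    have hKpos : 0 < volume K := by
      refine pos_iff_ne_zero.mpr fun h0 => ?_
      rw [h0, zero_add] at hK
      exact lt_irrefl _ hK
    obtain ⟨p, hpK, hpA⟩ := hmeet K hKc.isClosed hKpos
    exact (hKM hpK).2 (hAN hpA)
  · intro hMeas
    -- measurability implies null-measurability; reuse the previous argument
    have hpre : (fun p : ℝ × ℝ => if (p.1, p.2) ∈ A then (1 : ℝ) else 0) ⁻¹' {1} = A := by
      ext p
      simp only [mem_preimage, mem_singleton_iff]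
      by_cases hp : (p.1, p.2) ∈ A
      · simp [hp]
      · simp [hp]
    have hA : NullMeasurableSet A (volume : Measure (ℝ × ℝ)) := by
      have := (hMeas.nullMeasurable (μ := (volume : Measure (ℝ × ℝ)))) (measurableSet_singleton (1 : ℝ))
      rwa [hpre] at this
    obtain ⟨B, hBA, hBm, hae⟩ := hA.exists_measurable_subset_ae_eq
    have hB0 : volume B = 0 := by
      rw [Measure.volume_eq_prod ℝ ℝ, Measure.measure_prod_null hBm]
      refine Filter.Eventually.of_forall fun x => ?_
      have hsub : Prod.mk x ⁻¹' B ⊆ {y | (x, y) ∈ A} := fun y hy => hBA hy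
      exact ((hvert x).anti hsub).measure_zero volume
    have hA0 : volume A = 0 := by
      rw [← measure_congr hae]
      exact hB0
    obtain ⟨N, hAN, hNm, hN0⟩ := exists_measurable_superset_of_null hA0
    set M := ((Icc (0 : ℝ) 1) ×ˢ (Icc (0 : ℝ) 1)) \ N with hM
    have hMm : MeasurableSet M := (measurableSet_Icc.prod measurableSet_Icc).diff hNm
    have hMvol : volume M = 1 := by
      rw [hM, measure_diff_null hN0, Measure.volume_eq_prod, Measure.prod_prod,
        Real.volume_Icc]
      norm_num
    obtain ⟨K, hKM, hKc, hK⟩ := hMm.exists_isCompact_lt_add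
      (by rw [hMvol]; exact ENNReal.one_ne_top)
      (ε := volume M) (by rw [hMvol]; exact one_ne_zero)
    have hKpos : 0 < volume K := by
      refine pos_iff_ne_zero.mpr fun h0 => ?_
      rw [h0, zero_add] at hK
      exact lt_irrefl _ hK
    obtain ⟨p, hpK, hpA⟩ := hmeet K hKc.isClosed hKpos
    exact (hKM hpK).2 (hAN hpA)
end

section
/- Let Ω be a measurable space, 𝒬 a nonempty set of probability measures on Ω, Y : Ω → ℝ^d measurable, D ⊆ ℝ^d a vector subspace containing the support information of Y (i.e., P(Y ∈ D) = 1 for all P ∈ 𝒬), and suppose that for every nonzero h ∈ D there exists P ∈ 𝒬 with P(hY ≥ 0) < 1. Then the quantitative no-arbitrage bound holds: there exists α ∈ (0,1] such that for every h ∈ D there exists P_h ∈ 𝒬 with P_h(hY/|h| < -α) > α (for h ≠ 0). -/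
/-!
Normalising, it suffices to find `n` such that every unit vector `h ∈ D` lies in
`Uₙ = {h | ∃ P ∈ 𝒬, 1/(n+1) < P(h⬝Y < -1/(n+1))}`. By Fatou, `h ↦ P(h⬝Y < c)` is
lower semicontinuous, so the `Uₙ` form an increasing sequence of open sets; by the
no-arbitrage hypothesis and continuity from below they cover the unit sphere of `D`, and
compactness of that sphere yields a single `Uₙ` covering it.
-/

open Set MeasureTheory Filter Topology

section

variable {Ω : Type*}

theorem monotone_setOf_lt_neg_one_div (f : Ω → ℝ) :
    Monotone fun n : ℕ ↦ {ω | f ω < -(1 / ((n : ℝ) + 1))} :=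
  fun _ _ hmn _ (hω : _ < _) ↦
    (hω.trans_le (neg_le_neg (Nat.one_div_le_one_div (α := ℝ) hmn)) :)

theorem iUnion_setOf_lt_neg_one_div (f : Ω → ℝ) :
    ⋃ n : ℕ, {ω | f ω < -(1 / ((n : ℝ) + 1))} = {ω | f ω < 0} := by
  ext ω
  simp only [mem_iUnion, mem_ofPred_eq]
  refine ⟨fun ⟨n, hn⟩ ↦ hn.trans (neg_neg_of_pos (by positivity)), fun hω ↦ ?_⟩
  obtain ⟨n, hn⟩ := exists_nat_one_div_lt (neg_pos.2 hω)
  exact ⟨n, by linarith⟩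

variable [MeasurableSpace Ω]

theorem lowerSemicontinuous_measure_of_isOpen_setOf_mem
    {X : Type*} [TopologicalSpace X] [FirstCountableTopology X]
    (μ : Measure Ω) (U : X → Set Ω) (hU : ∀ ω, IsOpen {x | ω ∈ U x}) :
    LowerSemicontinuous fun x ↦ μ (U x) := by
  intro x y hy
  obtain ⟨N, hN⟩ := (𝓝 x).exists_antitone_basis
  set V : ℕ → Set Ω := fun k ↦ ⋂ x' ∈ N k, U x'
  have hV : Monotone V := fun k l hkl ↦ biInter_subset_biInter_left (hN.antitone hkl)
  have hUV : U x ⊆ ⋃ k, V k := fun ω hω ↦ by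
    obtain ⟨k, hk⟩ := hN.mem_iff.1 ((hU ω).mem_nhds hω)
    exact mem_iUnion.2 ⟨k, mem_iInter₂.2 fun x' hx' ↦ hk hx'⟩
  obtain ⟨k, hk⟩ :=
    lt_iSup_iff.1 (hV.measure_iUnion (μ := μ) ▸ hy.trans_le (measure_mono hUV))
  filter_upwards [hN.mem k] with x' hx'
  exact hk.trans_le (measure_mono (biInter_subset_of_mem hx'))

theorem lowerSemicontinuous_measure_setOf_inner_lt
    {E : Type*} [NormedAddCommGroup E] [InnerProductSpace ℝ E]
    (μ : Measure Ω) (Y : Ω → E) (c : ℝ) :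
    LowerSemicontinuous fun h : E ↦ μ {ω | inner ℝ h (Y ω) < c} :=
  lowerSemicontinuous_measure_of_isOpen_setOf_mem μ _ fun ω ↦
    isOpen_lt (f := fun h : E ↦ inner ℝ h (Y ω)) (by fun_prop) continuous_const

theorem measure_compl_pos_of_lt_one {μ : Measure Ω} [IsProbabilityMeasure μ] {s : Set Ω}
    (hs : μ s < 1) : 0 < μ sᶜ :=
  pos_iff_ne_zero.2 fun h0 ↦ hs.not_ge <| by
    simpa [h0] using measure_univ_le_add_compl (μ := μ) s

theorem eventually_ofReal_lt_measure_setOf_lt_neg (μ : Measure Ω) (f : Ω → ℝ)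
    (hf : 0 < μ {ω | f ω < 0}) :
    ∀ᶠ n : ℕ in atTop, ENNReal.ofReal (1 / (n + 1)) < μ {ω | f ω < -(1 / (n + 1))} := by
  have hsmall : Tendsto (fun n : ℕ ↦ ENNReal.ofReal (1 / (n + 1))) atTop (𝓝 0) := by
    simpa using ENNReal.tendsto_ofReal tendsto_one_div_add_atTop_nhds_zero_nat
  have hlarge := tendsto_measure_iUnion_atTop (μ := μ) (monotone_setOf_lt_neg_one_div f)
  rw [iUnion_setOf_lt_neg_one_div] at hlarge
  exact hsmall.eventually_lt hlarge hf

end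

theorem quantitative_no_arbitrage_general
    {d : ℕ} {Ω : Type*} [MeasurableSpace Ω]
    (Y : Ω → EuclideanSpace ℝ (Fin d))
    (𝒬 : Set (Measure Ω))
    (h𝒬prob : ∀ P ∈ 𝒬, IsProbabilityMeasure P)
    (D : Submodule ℝ (EuclideanSpace ℝ (Fin d)))
    (hNA : ∀ h ∈ D, h ≠ 0 → ∃ P ∈ 𝒬, P {ω | 0 ≤ (inner ℝ h (Y ω) : ℝ)} < 1) :
    ∃ α : ℝ, 0 < α ∧ α ≤ 1 ∧
      ∀ h ∈ D, h ≠ 0 → ∃ P ∈ 𝒬,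
        ENNReal.ofReal α < P {ω | (inner ℝ h (Y ω) : ℝ) / ‖h‖ < -α} := by
  set U : ℕ → Set (EuclideanSpace ℝ (Fin d)) := fun n ↦
    {h | ∃ P ∈ 𝒬, ENNReal.ofReal (1 / (n + 1)) < P {ω | inner ℝ h (Y ω) < -(1 / (n + 1))}}
  have hU_open (n : ℕ) : IsOpen (U n) :=
    isOpen_iff_mem_nhds.2 fun h ⟨P, hP, hlt⟩ ↦
      (lowerSemicontinuous_measure_setOf_inner_lt P Y _ h _ hlt).mono
        fun _ hlt' ↦ ⟨P, hP, hlt'⟩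
  have hU_mono : Monotone U := fun m n hmn h ⟨P, hP, hlt⟩ ↦
    ⟨P, hP, (ENNReal.ofReal_le_ofReal (Nat.one_div_le_one_div hmn)).trans_lt <|
      hlt.trans_le (measure_mono (monotone_setOf_lt_neg_one_div _ hmn))⟩
  have hU_cover : (D : Set _) ∩ Metric.sphere 0 1 ⊆ ⋃ n, U n := by
    rintro h ⟨hD, hh⟩
    obtain ⟨P, hP, hlt⟩ := hNA h hD (ne_zero_of_mem_unit_sphere ⟨h, hh⟩)
    have := h𝒬prob P hP
    have hpos : 0 < P {ω | inner ℝ h (Y ω) < 0} := by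
      simpa [compl_ofPred, not_le] using measure_compl_pos_of_lt_one hlt
    obtain ⟨n, hn⟩ := (eventually_ofReal_lt_measure_setOf_lt_neg P _ hpos).exists
    exact mem_iUnion.2 ⟨n, P, hP, hn⟩
  obtain ⟨n, hn⟩ := ((isCompact_sphere 0 1).inter_left D.closed_of_finiteDimensional)
    |>.elim_directed_cover U hU_open hU_cover hU_mono.directed_le
  refine ⟨1 / (n + 1), by positivity, div_le_one_of_le₀ (by simp) (by positivity),
    fun h hD h0 ↦ ?_⟩
  obtain ⟨P, hP, hlt⟩ := hn ⟨D.smul_mem ‖h‖⁻¹ hD, by simp [norm_smul, h0]⟩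
  exact ⟨P, hP, by simpa [real_inner_smul_left, div_eq_inv_mul] using hlt⟩

/-- quantitative no-arbitrage characterisation. If `P(Y ∈ D) = 1` for all
`P ∈ 𝒬` and for every nonzero `h ∈ D` some `P ∈ 𝒬` has `P(h⬝Y ≥ 0) < 1`, then there
is `α ∈ (0,1]` such that every nonzero `h ∈ D` admits `P_h ∈ 𝒬` with
`P_h(h⬝Y/|h| < -α) > α`. -/
theorem quantitative_no_arbitrage
    {d : ℕ} {Ω : Type*} [MeasurableSpace Ω]
    (Y : Ω → EuclideanSpace ℝ (Fin d)) (hY : Measurable Y)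
    (𝒬 : Set (Measure Ω)) (h𝒬ne : 𝒬.Nonempty)
    (h𝒬prob : ∀ P ∈ 𝒬, IsProbabilityMeasure P)
    (D : Submodule ℝ (EuclideanSpace ℝ (Fin d)))
    (hsupp : ∀ P ∈ 𝒬, P {ω | Y ω ∈ D} = 1)
    (hNA : ∀ h ∈ D, h ≠ 0 → ∃ P ∈ 𝒬, P {ω | 0 ≤ (inner ℝ h (Y ω) : ℝ)} < 1) :
    ∃ α : ℝ, 0 < α ∧ α ≤ 1 ∧
      ∀ h ∈ D, h ≠ 0 → ∃ P ∈ 𝒬,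
        ENNReal.ofReal α < P {ω | (inner ℝ h (Y ω) : ℝ) / ‖h‖ < -α} :=
  quantitative_no_arbitrage_general Y 𝒬 h𝒬prob D hNA
end

section
/- In a discrete-time frictionless market on Ω^T with price process S and a family 𝒬^T of priors closed under concatenation with selectors of the one-step prior sets, assume the no-arbitrage condition NA(𝒬^T): V_T^{0,φ} ≥ 0 𝒬^T-q.s. implies V_T^{0,φ} = 0 𝒬^T-q.s. for every strategy φ. If φ is a strategy with V_T^{x,φ} ≥ 0 𝒬^T-quasi-surely for some x ≥ 0, then V_t^{x,φ} ≥ 0 𝒬^t-quasi-surely for every t ∈ {0,…,T}. -/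
/-!
Suppose the wealth `V_t` of `φ` were negative with positive probability under some prior at
time `t`, and extend that prior to a prior at time `T`. The strategy that does nothing up to
time `t` and then follows `φ` exactly on `A = {V_t < 0}` has terminal wealth
`1_A (V_T - V_t) ≥ 0` quasi-surely, hence `= 0` quasi-surely by no-arbitrage; but on `A` this
forces `V_T = V_t < 0`, contradicting `V_T ≥ 0`.
-/

open Set MeasureTheory

/-- Restriction of a path of length `t` to its first `s` coordinates. -/
def restr {X : Type*} {s t : ℕ} (h : s ≤ t) (ω : Fin t → X) : Fin s → X :=
  fun i => ω (Fin.castLE h i)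

/-- Value at time `t` of the self-financing portfolio with initial capital `x` and
strategy `φ` (where `φ s`, decided at time `s`, is the holding over the period
`(s, s+1]`), for the `d`-dimensional price process `S`:
`V_t^{x,φ}(ω^t) = x + ∑_{s=0}^{t-1} φ_{s+1}(ω^s) ⬝ (S_{s+1}(ω^{s+1}) - S_s(ω^s))`. -/
noncomputable def wealth {X : Type*} {d : ℕ}
    (S : ∀ t : ℕ, (Fin t → X) → EuclideanSpace ℝ (Fin d))
    (φ : ∀ t : ℕ, (Fin t → X) → EuclideanSpace ℝ (Fin d))
    (x : ℝ) (t : ℕ) (ω : Fin t → X) : ℝ :=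
  x + ∑ s : Fin t,
    (inner ℝ (φ s (restr (Nat.le_of_lt s.isLt) ω))
      (S (s + 1) (restr s.isLt ω) - S s (restr (Nat.le_of_lt s.isLt) ω)) : ℝ)

open Finset

section

variable {X : Type*} {d : ℕ}

lemma measurable_restr [MeasurableSpace X] {s t : ℕ} (h : s ≤ t) :
    Measurable (restr (X := X) h) :=
  measurable_pi_lambda _ fun _ => measurable_pi_apply _

lemma measurable_wealth [MeasurableSpace X]
    {S φ : ∀ t : ℕ, (Fin t → X) → EuclideanSpace ℝ (Fin d)}
    (hS : ∀ t, Measurable (S t)) (hφ : ∀ t, Measurable (φ t)) (x : ℝ) (t : ℕ) :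
    Measurable (wealth S φ x t) :=
  measurable_const.add <| Finset.measurable_sum _ fun s _ =>
    ((hφ s).comp (measurable_restr _)).inner
      (((hS _).comp (measurable_restr _)).sub ((hS _).comp (measurable_restr _)))

/-- The gain `φ_{s+1} ⬝ ΔS_{s+1}` of period `(s, s+1]` along a path of length `T`,
set to `0` for `s ≥ T`. -/
noncomputable def gain (S φ : ∀ t : ℕ, (Fin t → X) → EuclideanSpace ℝ (Fin d))
    (T : ℕ) (ω : Fin T → X) (s : ℕ) : ℝ :=
  if h : s < T then
    inner ℝ (φ s (restr h.le ω)) (S (s + 1) (restr h ω) - S s (restr h.le ω))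
  else 0

section Gain

variable (S φ : ∀ t : ℕ, (Fin t → X) → EuclideanSpace ℝ (Fin d))

lemma wealth_eq_add_sum_gain (x : ℝ) (t : ℕ) (ω : Fin t → X) :
    wealth S φ x t ω = x + ∑ s ∈ range t, gain S φ t ω s := by
  rw [← Fin.sum_univ_eq_sum_range]
  exact congrArg (x + ·) (Finset.sum_congr rfl fun s _ => by rw [gain, dif_pos s.isLt])

lemma gain_restr {t T : ℕ} (ht : t ≤ T) (ω : Fin T → X) {s : ℕ} (hs : s < t) :
    gain S φ t (restr ht ω) s = gain S φ T ω s := by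
  rw [gain, gain, dif_pos hs, dif_pos (hs.trans_le ht)]
  rfl

lemma wealth_eq_wealth_restr_add_sum_gain (x : ℝ) {t T : ℕ} (ht : t ≤ T) (ω : Fin T → X) :
    wealth S φ x T ω = wealth S φ x t (restr ht ω) + ∑ s ∈ Ico t T, gain S φ T ω s := by
  rw [wealth_eq_add_sum_gain, wealth_eq_add_sum_gain, ← sum_range_add_sum_Ico _ ht,
    Finset.sum_congr rfl fun s hs => gain_restr S φ ht ω (mem_range.mp hs), add_assoc]

end Gain

/-- The paper's `Ψ_s = 1_A φ_s` for `s > t` and `Ψ_s = 0` for `s ≤ t` (with the paper's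
indexing: here `φ s` is the holding over `(s, s+1]`). -/
noncomputable def followOnAfter (t : ℕ) (A : Set (Fin t → X))
    (φ : ∀ t : ℕ, (Fin t → X) → EuclideanSpace ℝ (Fin d)) :
    ∀ s : ℕ, (Fin s → X) → EuclideanSpace ℝ (Fin d) :=
  fun s ω => if h : t ≤ s then (restr h ⁻¹' A).indicator (φ s) ω else 0

lemma measurable_followOnAfter [MeasurableSpace X] {t : ℕ} {A : Set (Fin t → X)}
    (hA : MeasurableSet A) {φ : ∀ t : ℕ, (Fin t → X) → EuclideanSpace ℝ (Fin d)}
    (hφ : ∀ t, Measurable (φ t)) (s : ℕ) : Measurable (followOnAfter t A φ s) := by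
  unfold followOnAfter
  split_ifs with h
  · exact (hφ s).indicator (hA.preimage (measurable_restr h))
  · exact measurable_const

section FollowOnAfter

variable (S φ : ∀ t : ℕ, (Fin t → X) → EuclideanSpace ℝ (Fin d))
  {t T : ℕ} (A : Set (Fin t → X)) (ht : t ≤ T) (ω : Fin T → X)

lemma gain_followOnAfter (s : ℕ) :
    gain S (followOnAfter t A φ) T ω s
      = if t ≤ s then (restr ht ⁻¹' A).indicator (gain S φ T · s) ω else 0 := by
  unfold gain followOnAfter
  by_cases hsT : s < T
  · by_cases hts : t ≤ s
    · simp only [dif_pos hsT, dif_pos hts, if_pos hts]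
      by_cases hA : restr ht ω ∈ A
      · rw [indicator_of_mem (by exact hA), indicator_of_mem (by exact hA)]
      · rw [indicator_of_notMem (by exact hA), indicator_of_notMem (by exact hA),
          inner_zero_left]
    · simp only [dif_pos hsT, dif_neg hts, if_neg hts, inner_zero_left]
  · simp only [dif_neg hsT, indicator_zero, ite_self]

lemma wealth_followOnAfter (x : ℝ) :
    wealth S (followOnAfter t A φ) 0 T ω
      = (restr ht ⁻¹' A).indicator
          (fun ω => wealth S φ x T ω - wealth S φ x t (restr ht ω)) ω := by
  rw [wealth_eq_add_sum_gain, zero_add, ← sum_range_add_sum_Ico _ ht]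
  simp only [gain_followOnAfter S φ A ht ω]
  rw [Finset.sum_eq_zero fun s hs => if_neg (mem_range.mp hs).not_ge, zero_add,
    Finset.sum_congr rfl fun s hs => if_pos (mem_Ico.mp hs).1]
  by_cases hA : restr ht ω ∈ A
  · simp only [indicator_of_mem (show ω ∈ restr ht ⁻¹' A from hA)]
    rw [wealth_eq_wealth_restr_add_sum_gain S φ x ht ω, add_sub_cancel_left]
  · simp only [indicator_of_notMem (show ω ∉ restr ht ⁻¹' A from hA), Finset.sum_const_zero]

end FollowOnAfter

lemma ae_nonneg_wealth_restr_of_noArbitrage [MeasurableSpace X]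
    {S φ : ∀ t : ℕ, (Fin t → X) → EuclideanSpace ℝ (Fin d)}
    (hS : ∀ t, Measurable (S t)) (hφ : ∀ t, Measurable (φ t))
    {T : ℕ} {𝒬 : Set (Measure (Fin T → X))} (h𝒬prob : ∀ P ∈ 𝒬, IsProbabilityMeasure P)
    (hNA : ∀ ψ : ∀ t : ℕ, (Fin t → X) → EuclideanSpace ℝ (Fin d),
      (∀ t, Measurable (ψ t)) →
      (∀ P ∈ 𝒬, P {ω | 0 ≤ wealth S ψ 0 T ω} = 1) →
      (∀ P ∈ 𝒬, P {ω | wealth S ψ 0 T ω = 0} = 1))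
    {x : ℝ} (hterm : ∀ P ∈ 𝒬, P {ω | 0 ≤ wealth S φ x T ω} = 1) {t : ℕ} (ht : t ≤ T) :
    ∀ P ∈ 𝒬, ∀ᵐ ω ∂P, 0 ≤ wealth S φ x t (restr ht ω) := by
  set A := {ω : Fin t → X | wealth S φ x t ω < 0}
  have hA : MeasurableSet A := measurableSet_lt (measurable_wealth hS hφ x t) measurable_const
  have hψ := measurable_followOnAfter hA hφ
  have hVψ := measurable_wealth hS hψ 0 T
  have hterm_ae : ∀ P ∈ 𝒬, ∀ᵐ ω ∂P, 0 ≤ wealth S φ x T ω := fun P hP =>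
    have := h𝒬prob P hP
    (mem_ae_iff_prob_eq_one (measurableSet_le measurable_const
      (measurable_wealth hS hφ x T))).2 (hterm P hP)
  have hψ_nonneg : ∀ P ∈ 𝒬, P {ω | 0 ≤ wealth S (followOnAfter t A φ) 0 T ω} = 1 := by
    intro P hP
    have := h𝒬prob P hP
    refine (mem_ae_iff_prob_eq_one (measurableSet_le measurable_const hVψ)).1 ?_
    filter_upwards [hterm_ae P hP] with ω hVT
    rw [wealth_followOnAfter S φ A ht ω x]
    by_cases hωA : ω ∈ restr ht ⁻¹' A
    · rw [indicator_of_mem hωA]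
      linarith [show wealth S φ x t (restr ht ω) < 0 from hωA]
    · rw [indicator_of_notMem hωA]
  intro P hP
  have := h𝒬prob P hP
  filter_upwards [hterm_ae P hP, (mem_ae_iff_prob_eq_one (measurableSet_eq_fun hVψ
    measurable_const)).2 (hNA _ hψ hψ_nonneg P hP)] with ω hVT hVψ_zero
  by_contra! hωA
  rw [wealth_followOnAfter S φ A ht ω x,
    indicator_of_mem (show ω ∈ restr ht ⁻¹' A from hωA)] at hVψ_zero
  linarith

end

theorem intertemporal_nonneg_wealth_general
    {X : Type*} [MeasurableSpace X] {d T : ℕ}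
    (S : ∀ t : ℕ, (Fin t → X) → EuclideanSpace ℝ (Fin d))
    (hS : ∀ t, Measurable (S t))
    (𝒬 : ∀ t : ℕ, Set (Measure (Fin t → X)))
    (h𝒬prob : ∀ t, ∀ P ∈ 𝒬 t, IsProbabilityMeasure P)
    -- any prior at time `s` extends to a prior at a later time `t` (concatenation
    -- with universally measurable selectors of the one-step prior sets)
    (hext : ∀ s t : ℕ, ∀ hst : s ≤ t, ∀ P ∈ 𝒬 s, ∃ P' ∈ 𝒬 t,
      Measure.map (restr hst) P' = P)
    -- the no-arbitrage condition NA(𝒬^T)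
    (hNA : ∀ ψ : ∀ t : ℕ, (Fin t → X) → EuclideanSpace ℝ (Fin d),
      (∀ t, Measurable (ψ t)) →
      (∀ P ∈ 𝒬 T, P {ω | 0 ≤ wealth S ψ 0 T ω} = 1) →
      (∀ P ∈ 𝒬 T, P {ω | wealth S ψ 0 T ω = 0} = 1))
    (φ : ∀ t : ℕ, (Fin t → X) → EuclideanSpace ℝ (Fin d))
    (hφ : ∀ t, Measurable (φ t))
    (x : ℝ)
    (hterm : ∀ P ∈ 𝒬 T, P {ω | 0 ≤ wealth S φ x T ω} = 1) :
    ∀ t ≤ T, ∀ P ∈ 𝒬 t, P {ω | 0 ≤ wealth S φ x t ω} = 1 := by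
  intro t ht P hP
  obtain ⟨P', hP', rfl⟩ := hext t T ht P hP
  have := h𝒬prob T P' hP'
  have hmeas : MeasurableSet {ω | 0 ≤ wealth S φ x t ω} :=
    measurableSet_le measurable_const (measurable_wealth hS hφ x t)
  rw [Measure.map_apply (measurable_restr ht) hmeas]
  exact (mem_ae_iff_prob_eq_one (hmeas.preimage (measurable_restr ht))).1
    (ae_nonneg_wealth_restr_of_noArbitrage hS hφ (h𝒬prob T) hNA hterm ht P' hP')

/-- under the multiple-priors no-arbitrage condition `NA(𝒬^T)`, any
strategy whose terminal wealth from initial capital `x ≥ 0` is non-negative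
`𝒬^T`-quasi-surely has non-negative wealth `𝒬^t`-quasi-surely at every
intermediate time `t ≤ T`. -/
theorem intertemporal_nonneg_wealth
    {X : Type*} [MeasurableSpace X] {d T : ℕ}
    (S : ∀ t : ℕ, (Fin t → X) → EuclideanSpace ℝ (Fin d))
    (hS : ∀ t, Measurable (S t))
    (𝒬 : ∀ t : ℕ, Set (Measure (Fin t → X)))
    (h𝒬ne : ∀ t ≤ T, (𝒬 t).Nonempty)
    (h𝒬prob : ∀ t, ∀ P ∈ 𝒬 t, IsProbabilityMeasure P)
    -- any prior at time `s` extends to a prior at a later time `t` (concatenation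
    -- with universally measurable selectors of the one-step prior sets)
    (hext : ∀ s t : ℕ, ∀ hst : s ≤ t, ∀ P ∈ 𝒬 s, ∃ P' ∈ 𝒬 t,
      Measure.map (restr hst) P' = P)
    -- the no-arbitrage condition NA(𝒬^T)
    (hNA : ∀ ψ : ∀ t : ℕ, (Fin t → X) → EuclideanSpace ℝ (Fin d),
      (∀ t, Measurable (ψ t)) →
      (∀ P ∈ 𝒬 T, P {ω | 0 ≤ wealth S ψ 0 T ω} = 1) →
      (∀ P ∈ 𝒬 T, P {ω | wealth S ψ 0 T ω = 0} = 1))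
    (φ : ∀ t : ℕ, (Fin t → X) → EuclideanSpace ℝ (Fin d))
    (hφ : ∀ t, Measurable (φ t))
    (x : ℝ) (hx : 0 ≤ x)
    (hterm : ∀ P ∈ 𝒬 T, P {ω | 0 ≤ wealth S φ x T ω} = 1) :
    ∀ t ≤ T, ∀ P ∈ 𝒬 t, P {ω | 0 ≤ wealth S φ x t ω} = 1 :=
  intertemporal_nonneg_wealth_general S hS 𝒬 h𝒬prob hext hNA φ hφ x hterm
end

section
/- Let X be a Polish space and Λ an open-valued set-valued map from X to ℝ^d whose graph is coanalytic in X × ℝ^d. Then Graph(Λ) ∈ ℬ_c(X) ⊗ ℬ(ℝ^d). -/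
/-!
Analytic sets are universally measurable. Write an analytic set as the image of a
continuous `f : (ℕ → ℕ) → α`; bounding the coordinates of `ℕ → ℕ` one at a time, each time
losing at most `δ k` of the outer measure of the image, produces a compact box whose image
carries almost all of the outer measure of the range. For the open-valued `Λ`, the graph is
the countable union over basic open sets `U` of `{x | U ⊆ Λ x} ×ˢ U`, and the complement of
`{x | U ⊆ Λ x}` is the projection of the analytic set `Graph(Λ)ᶜ ∩ (X × U)`.
-/

open Set MeasureTheory

/-- The universal sigma-algebra `ℬ_c(X) = ⋂_P ℬ_P(X)`: sets that are null-measurable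
for every probability measure `P` on `X`. -/
def universalCompletion (X : Type*) [MeasurableSpace X] : MeasurableSpace X where
  MeasurableSet' s := ∀ P : Measure X, IsProbabilityMeasure P → NullMeasurableSet s P
  measurableSet_empty := fun P _ => MeasurableSet.empty.nullMeasurableSet
  measurableSet_compl := fun _ hs P hP => (hs P hP).compl
  measurableSet_iUnion := fun _ hf P hP => NullMeasurableSet.iUnion (fun i => hf i P hP)

open scoped ENNReal

theorem exists_finset_pi_subset_of_univ_pi_subset {ι : Type*} {X : ι → Type*}
    [∀ i, TopologicalSpace (X i)] {t : ∀ i, Set (X i)} (ht : IsCompact (pi univ t))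
    (hne : ∀ i, (t i).Nonempty) {V : Set (∀ i, X i)} (hV : IsOpen V) (htV : pi univ t ⊆ V) :
    ∃ J : Finset ι, (J : Set ι).pi t ⊆ V := by
  classical
  obtain ⟨c, hc⟩ : (pi univ t).Nonempty := univ_pi_nonempty_iff.2 hne
  choose! I u hu huV using fun σ (hσ : σ ∈ pi univ t) => isOpen_pi_iff.1 hV σ (htV hσ)
  obtain ⟨F, hFt, hcover⟩ := ht.elim_nhds_subcover (fun σ => (I σ : Set ι).pi (u σ))
    fun σ hσ => (isOpen_set_pi (I σ).finite_toSet fun i hi => (hu σ hσ i hi).1).mem_nhds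
      fun i hi => (hu σ hσ i hi).2
  refine ⟨F.biUnion I, fun τ hτ => ?_⟩
  -- `τ` agrees on `F.biUnion I` with a point of `pi univ t`, and the boxes only see those indices.
  have hτ' : (F.biUnion I).piecewise τ c ∈ pi univ t := fun i _ => by
    by_cases hi : i ∈ F.biUnion I
    · simpa [hi] using hτ i hi
    · simpa [hi] using hc i trivial
  obtain ⟨σ, hσF, hσ⟩ := mem_iUnion₂.1 (hcover hτ')
  refine huV σ (hFt σ hσF) fun i hi => ?_
  simpa [Finset.piecewise_eq_of_mem _ _ _ (Finset.mem_biUnion.2 ⟨σ, hσF, hi⟩)] using hσ i hi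

theorem Monotone.exists_measure_iUnion_le_add {α : Type*} [MeasurableSpace α]
    {μ : Measure α} {s : ℕ → Set α} (hs : Monotone s) (hμ : μ (⋃ n, s n) ≠ ∞) {δ : ℝ≥0∞}
    (hδ : δ ≠ 0) :
    ∃ n, μ (⋃ n, s n) ≤ μ (s n) + δ := by
  have h := (tendsto_measure_iUnion_atTop (μ := μ) hs).add_const δ
  obtain ⟨n, hn⟩ := (h.eventually (lt_mem_nhds (ENNReal.lt_add_right hμ hδ))).exists
  exact ⟨n, hn.le⟩

theorem Continuous.exists_isCompact_subset_range_measure_le_add {α : Type*}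
    [TopologicalSpace α] [MeasurableSpace α] {f : (ℕ → ℕ) → α} (hf : Continuous f)
    (μ : Measure α) [IsFiniteMeasure μ] [μ.OuterRegular] {ε : ℝ≥0∞} (hε : ε ≠ 0) :
    ∃ K, IsCompact K ∧ K ⊆ range f ∧ μ (range f) ≤ μ K + ε := by
  have hε2 : ε / 2 ≠ 0 := (ENNReal.half_pos hε).ne'
  obtain ⟨δ, hδpos, hδsum⟩ := ENNReal.exists_pos_sum_of_countable' hε2 ℕ
  have hbound : ∀ (A : Set (ℕ → ℕ)) (k : ℕ),
      ∃ m, μ (f '' A) ≤ μ (f '' (A ∩ {σ | σ k ≤ m})) + δ k := by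
    intro A k
    have hmono : Monotone fun m => f '' (A ∩ {σ | σ k ≤ m}) :=
      fun m m' h => image_mono (inter_subset_inter_right _ fun σ hσ => le_trans hσ h)
    have hcover : ⋃ m, f '' (A ∩ {σ | σ k ≤ m}) = f '' A := by
      rw [← image_iUnion, ← inter_iUnion,
        iUnion_eq_univ_iff.2 fun σ => ⟨σ k, le_refl (σ k)⟩, inter_univ]
    simpa only [hcover] using
      hmono.exists_measure_iUnion_le_add (hcover ▸ measure_ne_top μ _) (hδpos k).ne'
  choose m hm using hbound
  obtain ⟨A, hA0, hAsucc⟩ : ∃ A : ℕ → Set (ℕ → ℕ),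
      A 0 = univ ∧ ∀ k, A (k + 1) = A k ∩ {σ | σ k ≤ m (A k) k} :=
    ⟨fun k => Nat.rec univ (fun k Ak => Ak ∩ {σ | σ k ≤ m Ak k}) k, rfl, fun _ => rfl⟩
  let b : ℕ → ℕ := fun k => m (A k) k
  have hA : ∀ k, A k = (Iio k).pi fun i => Iic (b i) := by
    intro k
    induction k with
    | zero => simp [hA0]
    | succ k ih =>
      rw [show A (k + 1) = A k ∩ {σ | σ k ≤ b k} from hAsucc k, ih]
      ext σ
      simp only [mem_inter_iff, Set.mem_pi, mem_Iio, mem_Iic, Nat.forall_lt_succ_right]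
      rfl
  have hμA : ∀ k, μ (range f) ≤ μ (f '' A k) + ∑ i ∈ Finset.range k, δ i := by
    intro k
    induction k with
    | zero => simp [hA0]
    | succ k ih =>
      calc μ (range f) ≤ μ (f '' A k) + ∑ i ∈ Finset.range k, δ i := ih
        _ ≤ μ (f '' A (k + 1)) + δ k + ∑ i ∈ Finset.range k, δ i := by
          gcongr; exact hAsucc k ▸ hm (A k) k
        _ = μ (f '' A (k + 1)) + ∑ i ∈ Finset.range (k + 1), δ i := by
          rw [Finset.sum_range_succ]; ring
  set C := pi univ fun i => Iic (b i)
  have hC : IsCompact C := isCompact_univ_pi fun i => (finite_Iic _).isCompact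
  refine ⟨f '' C, hC.image hf, image_subset_range _ _, ?_⟩
  obtain ⟨U, hCU, hU, hμU⟩ := exists_isOpen_lt_add (f '' C) (measure_ne_top μ _) hε2
  obtain ⟨J, hJ⟩ := exists_finset_pi_subset_of_univ_pi_subset hC (fun _ => nonempty_Iic)
    (hU.preimage hf) (image_subset_iff.1 hCU)
  obtain ⟨k, hJk⟩ : ∃ k, ∀ i ∈ J, i < k :=
    ⟨J.sup id + 1, fun i hi => Nat.lt_succ_of_le (Finset.le_sup (f := id) hi)⟩
  have hAU : A k ⊆ f ⁻¹' U := by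
    rw [hA]
    exact Subset.trans (fun σ hσ i hi => hσ i (hJk i hi)) hJ
  calc μ (range f) ≤ μ (f '' A k) + ∑ i ∈ Finset.range k, δ i := hμA k
    _ ≤ μ U + ε / 2 :=
      add_le_add (measure_mono (image_subset_iff.2 hAU)) ((ENNReal.sum_le_tsum _).trans hδsum.le)
    _ ≤ μ (f '' C) + ε / 2 + ε / 2 := by gcongr
    _ = μ (f '' C) + ε := by rw [add_assoc, ENNReal.add_halves]

theorem MeasureTheory.AnalyticSet.exists_isCompact_subset_measure_le_add {α : Type*}
    [TopologicalSpace α] [MeasurableSpace α] {s : Set α} (hs : AnalyticSet s) (μ : Measure α)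
    [IsFiniteMeasure μ] [μ.OuterRegular] {ε : ℝ≥0∞} (hε : ε ≠ 0) :
    ∃ K, IsCompact K ∧ K ⊆ s ∧ μ s ≤ μ K + ε := by
  rw [AnalyticSet] at hs
  rcases hs with rfl | ⟨f, hf, rfl⟩
  · exact ⟨∅, isCompact_empty, Subset.rfl, by simp⟩
  · exact hf.exists_isCompact_subset_range_measure_le_add μ hε

theorem MeasureTheory.NullMeasurableSet.of_forall_exists_measurableSet_subset {α : Type*}
    [MeasurableSpace α] {μ : Measure α} {s : Set α} (hs : μ s ≠ ∞)
    (h : ∀ ε ≠ 0, ∃ t ⊆ s, MeasurableSet t ∧ μ s ≤ μ t + ε) :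
    NullMeasurableSet s μ := by
  choose t hts ht hμt using fun n : ℕ =>
    h (n : ℝ≥0∞)⁻¹ (ENNReal.inv_ne_zero.2 (ENNReal.natCast_ne_top n))
  have hT : MeasurableSet (⋃ n, t n) := MeasurableSet.iUnion ht
  have hle : μ s ≤ μ (⋃ n, t n) :=
    ge_of_tendsto' (by simpa using tendsto_const_nhds.add ENNReal.tendsto_inv_nat_nhds_zero)
      fun n => (hμt n).trans (by gcongr; exact subset_iUnion t n)
  exact hT.nullMeasurableSet.congr
    (ae_eq_of_subset_of_measure_ge (iUnion_subset hts) hle hT.nullMeasurableSet hs)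

theorem MeasureTheory.AnalyticSet.nullMeasurableSet {α : Type*} [TopologicalSpace α]
    [T2Space α] [MeasurableSpace α] [OpensMeasurableSpace α] {s : Set α} (hs : AnalyticSet s)
    (μ : Measure α) [IsFiniteMeasure μ] [μ.OuterRegular] : NullMeasurableSet s μ :=
  .of_forall_exists_measurableSet_subset (measure_ne_top μ s) fun _ hε =>
    let ⟨K, hK, hKs, hμK⟩ := hs.exists_isCompact_subset_measure_le_add μ hε
    ⟨K, hKs, hK.isClosed.measurableSet, hμK⟩

theorem MeasureTheory.AnalyticSet.measurableSet_universalCompletion {X : Type*}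
    [TopologicalSpace X] [TopologicalSpace.MetrizableSpace X] [MeasurableSpace X]
    [BorelSpace X] {s : Set X} (hs : AnalyticSet s) :
    MeasurableSet[universalCompletion X] s :=
  fun P _ => hs.nullMeasurableSet P

theorem setOf_mem_eq_biUnion_prod {X Y : Type*} [TopologicalSpace Y] {B : Set (Set Y)}
    (hB : TopologicalSpace.IsTopologicalBasis B) {Λ : X → Set Y} (hΛ : ∀ x, IsOpen (Λ x)) :
    {p : X × Y | p.2 ∈ Λ p.1} = ⋃ U ∈ B, {x | U ⊆ Λ x} ×ˢ U := by
  ext ⟨x, y⟩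
  simp only [mem_iUnion, mem_prod, exists_prop]
  constructor
  · intro hy
    obtain ⟨U, hUB, hyU, hUΛ⟩ := hB.exists_subset_of_mem_open hy (hΛ x)
    exact ⟨U, hUB, hUΛ, hyU⟩
  · rintro ⟨U, -, hUΛ, hyU⟩
    exact hUΛ hyU

theorem MeasureTheory.AnalyticSet.inter {α : Type*} [TopologicalSpace α] [T2Space α]
    {s t : Set α} (hs : AnalyticSet s) (ht : AnalyticSet t) : AnalyticSet (s ∩ t) := by
  rw [inter_eq_iInter]
  exact AnalyticSet.iInter (Bool.forall_bool.2 ⟨ht, hs⟩)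

/-- an open-valued set-valued map `Λ : X ⇉ ℝ^d` on a Polish space with
coanalytic graph has its graph in `ℬ_c(X) ⊗ ℬ(ℝ^d)`. -/
theorem graph_open_valued_coanalytic
    {d : ℕ} {X : Type*} [TopologicalSpace X] [PolishSpace X]
    [m : MeasurableSpace X] [BorelSpace X]
    (Λ : X → Set (EuclideanSpace ℝ (Fin d)))
    (hopen : ∀ x, IsOpen (Λ x))
    (hco : MeasureTheory.AnalyticSet
      ({p : X × EuclideanSpace ℝ (Fin d) | p.2 ∈ Λ p.1}ᶜ)) :
    MeasurableSet[(universalCompletion X).prod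
        (inferInstance : MeasurableSpace (EuclideanSpace ℝ (Fin d)))]
      {p : X × EuclideanSpace ℝ (Fin d) | p.2 ∈ Λ p.1} := by
  obtain ⟨B, hBc, -, hB⟩ := TopologicalSpace.exists_countable_basis (EuclideanSpace ℝ (Fin d))
  rw [setOf_mem_eq_biUnion_prod hB hopen]
  refine MeasurableSet.biUnion hBc fun U hU => MeasurableSet.prod ?_ (hB.isOpen hU).measurableSet
  have hcompl : {x | U ⊆ Λ x}ᶜ = Prod.fst '' ({p | p.2 ∈ Λ p.1}ᶜ ∩ Prod.snd ⁻¹' U) := by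
    ext x
    simp [not_subset, and_comm]
  have hstrip : AnalyticSet (Prod.snd ⁻¹' U : Set (X × EuclideanSpace ℝ (Fin d))) := by
    simpa using ((hB.isOpen hU).preimage continuous_snd).analyticSet_image continuous_id
  refine MeasurableSet.of_compl ?_
  rw [hcompl]
  exact ((hco.inter hstrip).image_of_continuous continuous_fst).measurableSet_universalCompletion
end
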